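/- arXiv:1509.05815 — 6 statements merged into one kernel-verified Lean document; each statement's English description precedes it below -/
import Mathlib

section
/- Tropical weighted Cramer's rule: let A be an (N−1) × N tw-matrix (total weight N−1). Then the vector of maximal tw-minors of A (whose j-th entry is the j-th maximal tw-minor) lies in the tw-kernel of A. Moreover, every vector in the tw-kernel of A equals this vector plus a constant multiple of (1, …, 1) if and only if every maximal tw-minor of A is tw-nonsingular. -/
/-- An ordered partition of the column set `Fin N` into blocks of sizes `m i`. -/
def IsTWPartition {M N : ℕ} (m : Fin M → ℕ) (P : Fin M → Finset (Fin N)) : Prop :=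
  (∀ i, (P i).card = m i) ∧ ∀ j : Fin N, ∃! i, j ∈ P i

/-- The sum `Σ_i Σ_{j ∈ I_i} A_{ij}` associated to an ordered partition. -/
def partSum {M N : ℕ} (A : Fin M → Fin N → ℝ) (P : Fin M → Finset (Fin N)) : ℝ :=
  ∑ i, ∑ j ∈ P i, A i j

/-- The tw-permanent: the minimum of `partSum` over all ordered partitions. -/
noncomputable def twPerm {M N : ℕ} (m : Fin M → ℕ) (A : Fin M → Fin N → ℝ) : ℝ :=
  sInf (partSum A '' {P | IsTWPartition m P})

/-- `A` is tw-singular: the minimum in the tw-permanent is attained by at least two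
distinct ordered partitions. -/
def TWSingular {M N : ℕ} (m : Fin M → ℕ) (A : Fin M → Fin N → ℝ) : Prop :=
  ∃ P Q : Fin M → Finset (Fin N), IsTWPartition m P ∧ IsTWPartition m Q ∧ P ≠ Q ∧
    partSum A P = partSum A Q ∧ ∀ R, IsTWPartition m R → partSum A P ≤ partSum A R

/-- `x` lies in the tw-kernel of `A`. -/
def InTWKernel {M N : ℕ} (m : Fin M → ℕ) (A : Fin M → Fin N → ℝ) (x : Fin N → ℝ) : Prop :=
  ∀ i, m i + 1 ≤ {j : Fin N | ∀ k, x j + A i j ≤ x k + A i k}.ncard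

/-- The tw-matrix obtained by deleting column `j`. -/
def minorMatrix {M K : ℕ} (A : Fin M → Fin (K + 1) → ℝ) (j : Fin (K + 1)) :
    Fin M → Fin K → ℝ :=
  fun i k => A i (j.succAbove k)

/-- The `j`-th maximal tw-minor of an `(N-1) × N` tw-matrix. -/
noncomputable def maxMinor {M K : ℕ} (m : Fin M → ℕ) (A : Fin M → Fin (K + 1) → ℝ)
    (j : Fin (K + 1)) : ℝ :=
  twPerm m (minorMatrix A j)

/-!
The vector `y` of maximal minors lies in the kernel: for a row `i`, take `j` minimising
`y j + A i j` and a partition `P` of the columns other than `j` realising `y j`. Exchanging a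
column `k` of block `i` for `j` gives a partition avoiding `k`, so `y k + A i k ≤ y j + A i j`,
and `j` together with the `m i` columns of `P i` are minimisers of row `i`.

For a kernel vector `x`, the reduced matrix `B i k = x k + A i k - min_l (x l + A i l)` is
nonnegative and vanishes exactly on the row minimisers `Z i`; on partitions of the columns other
than `j`, its sum differs from `partSum A` by `∑_{k ≠ j} x k` minus a constant. If no maximal
minor is singular, take an optimal partition `P` for `j` and apply Hall's theorem to the sets
`(P i ∪ Z i) \ {j'}`: a matching is a partition for `j'` of no larger reduced cost, so
`y j' - x j' ≤ y j - x j`, while a Hall obstruction yields a cycle of zero entries along which `P`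
rotates into a second optimal partition. If instead some minor is singular, there is a nonempty
proper set `C` of columns meeting every `Z i` (for `x = y`) in no column or in more than `m i`
columns: it grows either from a Hall obstruction for the sets `Z i`, or, when Hall's condition
holds and hence optimal partitions only use zeros of `B`, from the columns where two optimal
partitions differ. Raising `y` by a small `ε` outside `C` stays in the kernel.
-/

open Finset Function

section Partitions

variable {ι α : Type*} [DecidableEq α]

theorem exists_disjoint_blocks_of_hall (m : ι → ℕ) (C : ι → Finset α)
    (hall : ∀ S : Finset ι, ∑ i ∈ S, m i ≤ (S.biUnion C).card) :
    ∃ Q : ι → Finset α,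
      (∀ i, (Q i).card = m i) ∧ Pairwise (Disjoint on Q) ∧ ∀ i, Q i ⊆ C i := by
  classical
  have hall' (s : Finset ((i : ι) × Fin (m i))) :
      s.card ≤ (s.biUnion fun p => C p.1).card := by
    calc s.card ≤ ((s.image Sigma.fst).sigma fun i => univ).card :=
          card_le_card fun p hp => mem_sigma.mpr ⟨mem_image_of_mem _ hp, mem_univ _⟩
      _ = ∑ i ∈ s.image Sigma.fst, m i := by simp
      _ ≤ _ := (hall _).trans_eq (by rw [image_biUnion])
  obtain ⟨f, hf, hfC⟩ :=
    (all_card_le_biUnion_card_iff_exists_injective fun p : (i : ι) × Fin (m i) => C p.1).mp hall'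
  refine ⟨fun i => univ.image fun c => f ⟨i, c⟩, fun i => ?_, fun i i' hne => ?_,
    fun i => ?_⟩
  · rw [card_image_of_injective _ fun c c' h => sigma_mk_injective (hf h)]
    simp
  · simp only [onFun, disjoint_left, mem_image, mem_univ, true_and, not_exists]
    rintro _ ⟨c, rfl⟩ c' h
    exact hne (congrArg Sigma.fst (hf h)).symm
  · simpa [subset_iff] using fun c => hfC ⟨i, c⟩

variable [Fintype ι]

structure IsTWPartitionOn (m : ι → ℕ) (U : Finset α) (P : ι → Finset α) : Prop where
  card_eq : ∀ i, (P i).card = m i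
  pairwise_disjoint : Pairwise (Disjoint on P)
  biUnion_eq : univ.biUnion P = U

namespace IsTWPartitionOn

variable {m : ι → ℕ} {U : Finset α} {P : ι → Finset α}

theorem subset (h : IsTWPartitionOn m U P) (i : ι) : P i ⊆ U :=
  h.biUnion_eq ▸ subset_biUnion_of_mem P (mem_univ i)

theorem exists_mem (h : IsTWPartitionOn m U P) {k : α} (hk : k ∈ U) : ∃ i, k ∈ P i := by
  simpa [← h.biUnion_eq] using hk

theorem eq_of_mem (h : IsTWPartitionOn m U P) {i i' : ι} {k : α} (hk : k ∈ P i)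
    (hk' : k ∈ P i') : i = i' :=
  by_contra fun hne => disjoint_left.mp (h.pairwise_disjoint hne) hk hk'

theorem sum_eq (h : IsTWPartitionOn m U P) {β : Type*} [AddCommMonoid β] (g : α → β) :
    ∑ i, ∑ k ∈ P i, g k = ∑ k ∈ U, g k := by
  rw [← h.biUnion_eq, sum_biUnion (h.pairwise_disjoint.set_pairwise _)]

theorem card_eq_sum (h : IsTWPartitionOn m U P) : U.card = ∑ i, m i := by
  rw [card_eq_sum_ones, ← h.sum_eq]
  simp [h.card_eq]

theorem of_disjoint (hcard : ∀ i, (P i).card = m i) (hdisj : Pairwise (Disjoint on P))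
    (hsub : ∀ i, P i ⊆ U) (hU : ∑ i, m i = U.card) : IsTWPartitionOn m U P := by
  refine ⟨hcard, hdisj, eq_of_subset_of_card_le (biUnion_subset.mpr fun i _ => hsub i) ?_⟩
  rw [card_biUnion (hdisj.set_pairwise _), ← hU]
  simp [hcard]

end IsTWPartitionOn

theorem exists_isTWPartitionOn (m : ι → ℕ) {U : Finset α} (hU : ∑ i, m i = U.card) :
    ∃ P, IsTWPartitionOn m U P := by
  classical
  obtain ⟨P, hcard, hdisj, hsub⟩ := exists_disjoint_blocks_of_hall m (fun _ => U) fun S => by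
    rcases S.eq_empty_or_nonempty with rfl | ⟨i, hi⟩
    · simp
    · calc ∑ i ∈ S, m i ≤ ∑ i, m i := sum_le_univ_sum_of_nonneg fun _ => Nat.zero_le _
        _ = U.card := hU
        _ ≤ _ := card_le_card (subset_biUnion_of_mem (fun _ => U) hi)
  exact ⟨P, .of_disjoint hcard hdisj hsub hU⟩

end Partitions

theorem exists_bijOn_of_mapsTo {ι : Type*} [Finite ι] {S : Finset ι} (hS : S.Nonempty)
    {σ : ι → ι} (hσ : ∀ i ∈ S, σ i ∈ S) :
    ∃ O ⊆ S, O.Nonempty ∧ Set.BijOn σ O O := by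
  classical
  obtain ⟨x, hx⟩ := hS
  obtain ⟨a, b, hab, hlt⟩ : ∃ a b, σ^[a] x = σ^[b] x ∧ a < b := by
    obtain ⟨a, b, heq, hne⟩ : ∃ a b, σ^[a] x = σ^[b] x ∧ a ≠ b := by
      simpa [Injective] using not_injective_infinite_finite (σ^[·] x)
    rcases hne.lt_or_gt with h | h
    exacts [⟨a, b, heq, h⟩, ⟨b, a, heq.symm, h⟩]
  have hmaps : Set.MapsTo σ S S := hσ
  have hper : σ^[a] x ∈ periodicPts σ := by
    refine mk_mem_periodicPts (n := b - a) (by omega) ?_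
    rw [IsPeriodicPt, IsFixedPt, ← iterate_add_apply, Nat.sub_add_cancel hlt.le, hab]
  refine ⟨S.filter (· ∈ periodicPts σ), filter_subset _ _,
    ⟨_, mem_filter.mpr ⟨hmaps.iterate a hx, hper⟩⟩, ?_, ?_, ?_⟩
  · intro r hr
    simp only [mem_coe, mem_filter] at hr ⊢
    exact ⟨hσ r hr.1, (bijOn_periodicPts σ).mapsTo hr.2⟩
  · exact (bijOn_periodicPts σ).injOn.mono fun r hr => by simp_all
  · intro r hr
    simp only [mem_coe, mem_filter] at hr
    set n := minimalPeriod σ r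
    have hn : 0 < n := minimalPeriod_pos_of_mem_periodicPts hr.2
    refine ⟨σ^[n - 1] r, ?_, ?_⟩
    · simp only [mem_coe, mem_filter]
      exact ⟨hmaps.iterate _ hr.1, (bijOn_periodicPts σ).mapsTo.iterate _ hr.2⟩
    · rw [← iterate_succ_apply' σ, Nat.succ_eq_add_one, Nat.sub_add_cancel hn,
        iterate_minimalPeriod]

section Exchange

variable {ι α G : Type*} [Fintype ι] [DecidableEq ι] [DecidableEq α] [AddCommGroup G]
  {m : ι → ℕ} {U : Finset α} {P : ι → Finset α}

namespace IsTWPartitionOn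

theorem swap (h : IsTWPartitionOn m U P) {i : ι} {k j : α} (hk : k ∈ P i) (hj : j ∉ U) :
    IsTWPartitionOn m (insert j (U.erase k)) (update P i (insert j ((P i).erase k))) ∧
      ∀ c : ι → α → G, ∑ r, ∑ l ∈ update P i (insert j ((P i).erase k)) r, c r l
        = ∑ r, ∑ l ∈ P r, c r l + c i j - c i k := by
  have hjP : j ∉ (P i).erase k := fun hj' => hj (h.subset i (mem_of_mem_erase hj'))
  have hkU : k ∈ U := h.subset i hk
  refine ⟨.of_disjoint (fun r => ?_) (fun r s hrs => ?_) (fun r => ?_) ?_, fun c => ?_⟩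
  · rcases eq_or_ne r i with rfl | hr
    · have := card_pos.mpr ⟨k, hk⟩
      rw [update_self, card_insert_of_notMem hjP, card_erase_of_mem hk, h.card_eq] at *
      omega
    · rw [update_of_ne hr, h.card_eq]
  · have hnew : ∀ s ≠ i, Disjoint (insert j ((P i).erase k)) (P s) := fun s hs =>
      disjoint_insert_left.mpr ⟨fun hjs => hj (h.subset s hjs),
        (h.pairwise_disjoint hs.symm).mono_left (erase_subset _ _)⟩
    rcases eq_or_ne r i with rfl | hr
    · simpa only [onFun, update_self, update_of_ne hrs.symm] using hnew s hrs.symm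
    rcases eq_or_ne s i with rfl | hs
    · simpa only [onFun, update_self, update_of_ne hr] using (hnew r hr).symm
    simpa only [onFun, update_of_ne hr, update_of_ne hs] using h.pairwise_disjoint hrs
  · rcases eq_or_ne r i with rfl | hr
    · rw [update_self]
      exact insert_subset_insert _ (erase_subset_erase _ (h.subset r))
    · rw [update_of_ne hr]
      intro l hl
      refine mem_insert_of_mem (mem_erase.mpr ⟨?_, h.subset r hl⟩)
      rintro rfl
      exact hr (h.eq_of_mem hl hk)
  · have := card_pos.mpr ⟨k, hkU⟩
    rw [card_insert_of_notMem (fun h' => hj (mem_of_mem_erase h')), card_erase_of_mem hkU,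
      ← h.card_eq_sum]
    omega
  · rw [← sum_erase_add _ _ (mem_univ i), ← sum_erase_add univ _ (mem_univ i), update_self,
      sum_insert hjP, sum_erase_eq_sub hk,
      sum_congr rfl fun r hr => by rw [update_of_ne (ne_of_mem_erase hr)]]
    abel

theorem rotate (h : IsTWPartitionOn m U P) {O : Finset ι} (hO : O.Nonempty) {σ : ι → ι}
    (hσ : Set.BijOn σ O O) {z : ι → α} (hzP : ∀ r ∈ O, z r ∉ P r)
    (hzσ : ∀ r ∈ O, z r ∈ P (σ r)) :
    ∃ P', IsTWPartitionOn m U P' ∧ (∀ r ∈ O, z r ∈ P' r) ∧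
      ∀ c : ι → α → G, ∑ r, ∑ l ∈ P' r, c r l + ∑ r ∈ O, c (σ r) (z r)
        = ∑ r, ∑ l ∈ P r, c r l + ∑ r ∈ O, c r (z r) := by
  have : Nonempty ι := ⟨hO.choose⟩
  set τ := invFunOn σ O
  have hστ : ∀ r ∈ O, σ (τ r) = r := fun r hr => hσ.invOn_invFunOn.2 hr
  have hτσ : ∀ r ∈ O, τ (σ r) = r := fun r hr => hσ.invOn_invFunOn.1 hr
  have hτO : ∀ r ∈ O, τ r ∈ O := fun r hr => hσ.surjOn.mapsTo_invFunOn hr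
  have hzτ : ∀ r ∈ O, z (τ r) ∈ P r := fun r hr => by
    simpa only [hστ r hr] using hzσ _ (hτO r hr)
  set P' := fun r => if r ∈ O then insert (z r) ((P r).erase (z (τ r))) else P r
  have hmem (r : ι) (a : α) :
      a ∈ P' r ↔ (r ∈ O ∧ a = z r) ∨ (a ∈ P r ∧ (r ∈ O → a ≠ z (τ r))) := by
    by_cases hr : r ∈ O <;> simp [P', hr, and_comm]
  have hrow (c : ι → α → G) (r : ι) : ∑ l ∈ P' r, c r l
      = ∑ l ∈ P r, c r l + if r ∈ O then c r (z r) - c r (z (τ r)) else 0 := by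
    by_cases hr : r ∈ O
    · simp only [P', if_pos hr]
      rw [sum_insert fun h' => hzP r hr (mem_of_mem_erase h'), sum_erase_eq_sub (hzτ r hr)]
      abel
    · simp [P', hr]
  refine ⟨P', .of_disjoint (fun r => ?_) (fun r s hrs => ?_) (fun r => ?_) h.card_eq_sum.symm,
    fun r hr => (hmem r _).mpr (.inl ⟨hr, rfl⟩), fun c => ?_⟩
  · by_cases hr : r ∈ O
    · have := card_pos.mpr ⟨_, hzτ r hr⟩
      simp only [P', if_pos hr]
      rw [card_insert_of_notMem fun h' => hzP r hr (mem_of_mem_erase h'),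
        card_erase_of_mem (hzτ r hr), h.card_eq] at *
      omega
    · simp [P', hr, h.card_eq]
  · refine disjoint_left.mpr fun a ha ha' => ?_
    rw [hmem] at ha ha'
    rcases ha with ⟨hr, rfl⟩ | ⟨har, hr'⟩ <;> rcases ha' with ⟨hs, hzs⟩ | ⟨has, hs'⟩
    · exact hrs (hσ.injOn hr hs (h.eq_of_mem (hzσ r hr) (hzs ▸ hzσ s hs)))
    · obtain rfl := h.eq_of_mem (hzσ r hr) has
      exact hs' (hσ.mapsTo hr) (by rw [hτσ r hr])
    · obtain rfl := h.eq_of_mem (hzσ s hs) (hzs ▸ har)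
      exact hr' (hσ.mapsTo hs) (by rw [hzs, hτσ s hs])
    · exact hrs (h.eq_of_mem har has)
  · by_cases hr : r ∈ O
    · simp only [P', if_pos hr]
      exact insert_subset (h.subset _ (hzσ r hr)) ((erase_subset _ _).trans (h.subset r))
    · simpa [P', hr] using h.subset r
  · have hreindex : ∑ r ∈ O, c r (z (τ r)) = ∑ r ∈ O, c (σ r) (z r) :=
      sum_nbij' τ σ hτO (fun r hr => hσ.mapsTo hr) hστ hτσ fun r hr => by rw [hστ r hr]
    rw [sum_congr rfl fun r _ => hrow c r, sum_add_distrib, sum_ite_mem, univ_inter,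
      sum_sub_distrib, hreindex]
    abel

theorem exists_ne_sum_le (h : IsTWPartitionOn m U P) {c : ι → α → ℝ}
    (hc : ∀ i k, 0 ≤ c i k) {S : Finset ι} (hS : S.Nonempty)
    (hZ : ∀ i ∈ S, ∃ k ∈ S.biUnion P, k ∉ P i ∧ c i k = 0) :
    ∃ P', IsTWPartitionOn m U P' ∧ P' ≠ P ∧
      ∑ r, ∑ l ∈ P' r, c r l ≤ ∑ r, ∑ l ∈ P r, c r l := by
  have : Nonempty ι := ⟨hS.choose⟩
  have : Nonempty α := ⟨(hZ _ hS.choose_spec).choose⟩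
  choose! z hzS hzP hz0 using hZ
  choose! σ hσS hzσ using fun i hi => mem_biUnion.mp (hzS i hi)
  obtain ⟨O, hOS, hO, hbij⟩ := exists_bijOn_of_mapsTo hS hσS
  obtain ⟨P', hP', hzP', hsum⟩ :=
    h.rotate (G := ℝ) hO hbij (fun r hr => hzP r (hOS hr)) (fun r hr => hzσ r (hOS hr))
  obtain ⟨r, hr⟩ := hO
  refine ⟨P', hP', fun hPP => hzP r (hOS hr) (hPP ▸ hzP' r hr), ?_⟩
  have hzero : ∑ r ∈ O, c r (z r) = 0 := sum_eq_zero fun r hr => hz0 r (hOS hr)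
  have := hsum c
  linarith [sum_nonneg fun r (_ : r ∈ O) => hc (σ r) (z r)]

end IsTWPartitionOn

end Exchange

section Embedding

variable {ι α β : Type*} [Fintype ι] [DecidableEq α] [DecidableEq β]
  {m : ι → ℕ} {U : Finset α}

theorem IsTWPartitionOn.map {P : ι → Finset α} (h : IsTWPartitionOn m U P) (e : α ↪ β) :
    IsTWPartitionOn m (U.map e) fun i => (P i).map e := by
  refine ⟨fun i => by simp [h.card_eq], fun i i' hne => ?_, ?_⟩
  · simpa [onFun] using h.pairwise_disjoint hne
  · rw [← h.biUnion_eq]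
    ext b
    simp only [mem_map, mem_biUnion, mem_univ, true_and]
    exact ⟨fun ⟨i, a, ha, hab⟩ => ⟨a, ⟨i, ha⟩, hab⟩,
      fun ⟨a, ⟨i, ha⟩, hab⟩ => ⟨i, a, ha, hab⟩⟩

theorem IsTWPartitionOn.exists_map_eq {e : α ↪ β} {Q : ι → Finset β}
    (h : IsTWPartitionOn m (U.map e) Q) :
    ∃ P, IsTWPartitionOn m U P ∧ (fun i => (P i).map e) = Q := by
  choose P hPU hPQ using fun i => subset_map_iff.mp (h.subset i)
  refine ⟨P, .of_disjoint (fun i => ?_) (fun i i' hne => ?_) hPU ?_,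
    funext fun i => (hPQ i).symm⟩
  · rw [← card_map e, ← hPQ, h.card_eq]
  · simpa [onFun, hPQ] using h.pairwise_disjoint hne
  · rw [← h.card_eq_sum, card_map]

end Embedding

theorem Finset.sum_le_sum_of_subset_union_of_eq_zero {α β : Type*} [DecidableEq α]
    [AddCommMonoid β] [PartialOrder β] [IsOrderedAddMonoid β] {s t z : Finset α} {f : α → β}
    (hf : ∀ a, 0 ≤ f a) (hz : ∀ a ∈ z, f a = 0) (h : s ⊆ t ∪ z) :
    ∑ a ∈ s, f a ≤ ∑ a ∈ t, f a :=
  (sum_le_sum_of_subset_of_nonneg h fun a _ _ => hf a).trans_eq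
    (sum_subset subset_union_left fun a ha hat => hz a (by simpa [hat] using ha)).symm

theorem IsTWPartitionOn.exists_mem_sdiff_of_card_lt {ι α : Type*} [Fintype ι] [DecidableEq α]
    {m : ι → ℕ} {U : Finset α} {P : ι → Finset α} (hP : IsTWPartitionOn m U P)
    {Z : ι → Finset α} (hZ : ∀ i, m i < (Z i).card) {j : α} {S : Finset ι}
    (hS : (S.biUnion fun i => (P i ∪ Z i).erase j).card < ∑ i ∈ S, m i) :
    S.Nonempty ∧ ∀ i ∈ S, ∃ k ∈ S.biUnion P, k ∉ P i ∧ k ∈ Z i := by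
  set W := S.biUnion P
  have hW : W.card = ∑ i ∈ S, m i := by
    rw [card_biUnion (hP.pairwise_disjoint.set_pairwise _)]
    exact sum_congr rfl fun i _ => hP.card_eq i
  have hsub : W.erase j ⊆ S.biUnion fun i => (P i ∪ Z i).erase j := by
    intro k hk
    obtain ⟨i, hi, hki⟩ := mem_biUnion.mp (mem_of_mem_erase hk)
    exact mem_biUnion.mpr ⟨i, hi, mem_erase.mpr ⟨ne_of_mem_erase hk, mem_union_left _ hki⟩⟩
  have hjW : j ∈ W := by
    by_contra hj
    rw [erase_eq_of_notMem hj] at hsub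
    have := card_le_card hsub
    omega
  have heq : (S.biUnion fun i => (P i ∪ Z i).erase j) = W.erase j :=
    (eq_of_subset_of_card_le hsub (by rw [card_erase_of_mem hjW]; omega)).symm
  refine ⟨nonempty_of_sum_ne_zero (f := m) (by omega), fun i hi => ?_⟩
  have hZW : Z i ⊆ W := fun k hk => by
    by_cases hkj : k = j
    · exact hkj ▸ hjW
    · refine mem_of_mem_erase (heq ▸ mem_biUnion.mpr ⟨i, hi, ?_⟩)
      exact mem_erase.mpr ⟨hkj, mem_union_right _ hk⟩
  obtain ⟨k, hkZ, hkP⟩ := not_subset.mp fun h => (card_le_card h).not_gt (hP.card_eq i ▸ hZ i)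
  exact ⟨k, hZW hkZ, hkP, hkZ⟩

section Closure

variable {ι α : Type*} [DecidableEq α] {Z : ι → Finset α} {m : ι → ℕ}

def IsTWClosed (Z : ι → Finset α) (m : ι → ℕ) (C : Finset α) : Prop :=
  ∀ i, (Z i ∩ C).card = 0 ∨ m i + 1 ≤ (Z i ∩ C).card

-- A row that `C` does not meet yet counts as meeting it once, so the deficit is at most `m i`.
def twDeficit (Z : ι → Finset α) (m : ι → ℕ) (C : Finset α) (i : ι) : ℕ :=
  m i + 1 - max 1 (Z i ∩ C).card

theorem twDeficit_le (C : Finset α) (i : ι) : twDeficit Z m C i ≤ m i := by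
  unfold twDeficit
  omega

theorem twDeficit_anti {C C' : Finset α} (h : C ⊆ C') (i : ι) :
    twDeficit Z m C' i ≤ twDeficit Z m C i := by
  have := card_le_card (inter_subset_inter_left h : Z i ∩ C ⊆ Z i ∩ C')
  unfold twDeficit
  omega

variable [Fintype ι]

theorem exists_ssuperset_card_add_twDeficit_le (hZ : ∀ i, m i < (Z i).card) {C : Finset α}
    {i : ι} (h₀ : 0 < (Z i ∩ C).card) (hm : (Z i ∩ C).card ≤ m i) :
    ∃ C', C ⊂ C' ∧
      C'.card + ∑ r, twDeficit Z m C' r ≤ C.card + ∑ r, twDeficit Z m C r := by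
  classical
  have hsplit := card_inter_add_card_sdiff (Z i) C
  obtain ⟨D, hDZ, hD⟩ := exists_subset_card_eq
    (show m i + 1 - (Z i ∩ C).card ≤ (Z i \ C).card by have := hZ i; omega)
  have hDC : Disjoint C D := disjoint_left.mpr fun k hkC hkD => (mem_sdiff.mp (hDZ hkD)).2 hkC
  have hCD : (C ∪ D).card = C.card + D.card := card_union_of_disjoint hDC
  have hinter : m i + 1 ≤ (Z i ∩ (C ∪ D)).card := by
    rw [inter_union_distrib_left, inter_eq_right.mpr fun k hk => (mem_sdiff.mp (hDZ hk)).1,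
      card_union_of_disjoint (hDC.mono_left inter_subset_right)]
    omega
  have hrow (r : ι) :
      twDeficit Z m (C ∪ D) r + (if r = i then D.card else 0) ≤ twDeficit Z m C r := by
    split_ifs with hr
    · subst hr
      unfold twDeficit
      omega
    · simpa using twDeficit_anti subset_union_left r
  refine ⟨C ∪ D, Finset.ssubset_iff_subset_ne.mpr ⟨subset_union_left, fun h => ?_⟩, ?_⟩
  · rw [← h] at hCD
    omega
  · have := sum_le_sum fun r (_ : r ∈ univ) => hrow r
    rw [sum_add_distrib, sum_ite_eq' univ i, if_pos (mem_univ i)] at this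
    omega

theorem exists_isTWClosed_superset [Fintype α] (hZ : ∀ i, m i < (Z i).card) (C₀ : Finset α) :
    ∃ C, C₀ ⊆ C ∧ C.card ≤ C₀.card + ∑ i, twDeficit Z m C₀ i ∧
      IsTWClosed Z m C := by
  classical
  let Φ (C : Finset α) := C.card + ∑ i, twDeficit Z m C i
  obtain ⟨C, hC, hmax⟩ :=
    exists_max_image (univ.filter fun C => C₀ ⊆ C ∧ Φ C ≤ Φ C₀) card ⟨C₀, by simp⟩
  simp only [mem_filter, mem_univ, true_and] at hC hmax
  refine ⟨C, hC.1, (Nat.le_add_right _ _).trans hC.2, fun i => ?_⟩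
  by_contra hi
  simp only [not_or, not_le] at hi
  obtain ⟨C', hCC', hΦ⟩ := exists_ssuperset_card_add_twDeficit_le hZ (Nat.pos_of_ne_zero hi.1)
    (Nat.lt_succ_iff.mp hi.2)
  exact (card_lt_card hCC').not_ge (hmax C' ⟨hC.1.trans hCC'.subset, hΦ.trans hC.2⟩)

theorem exists_isTWClosed_of_card_biUnion_lt [Fintype α] (hZ : ∀ i, m i < (Z i).card)
    {R : Finset ι} (hR : (R.biUnion Z).card < ∑ i ∈ R, m i) :
    ∃ C, C.Nonempty ∧ C.card ≤ ∑ i, m i ∧ IsTWClosed Z m C := by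
  classical
  obtain ⟨i, hi⟩ := nonempty_of_sum_ne_zero (s := R) (f := m) (by omega)
  obtain ⟨k, hk⟩ := card_pos.mp (Nat.zero_lt_of_lt (hZ i))
  obtain ⟨C, hsub, hC, hcl⟩ := exists_isTWClosed_superset hZ (R.biUnion Z)
  refine ⟨C, ⟨k, hsub (mem_biUnion.mpr ⟨i, hi, hk⟩)⟩, hC.trans ?_, hcl⟩
  have hrow (r : ι) : twDeficit Z m (R.biUnion Z) r + (if r ∈ R then m r else 0) ≤ m r := by
    split_ifs with hr
    · have := hZ r
      rw [twDeficit, inter_eq_left.mpr (subset_biUnion_of_mem Z hr)]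
      omega
    · simpa using twDeficit_le _ r
  have := sum_le_sum fun r (_ : r ∈ univ) => hrow r
  rw [sum_add_distrib, sum_ite_mem, univ_inter] at this
  omega

theorem IsTWPartitionOn.exists_isTWClosed_of_ne [Fintype α] {U : Finset α}
    {P Q : ι → Finset α} (hZ : ∀ i, m i < (Z i).card) (hP : IsTWPartitionOn m U P)
    (hQ : IsTWPartitionOn m U Q) (hne : P ≠ Q) (hPZ : ∀ i, P i ⊆ Z i)
    (hQZ : ∀ i, Q i ⊆ Z i) :
    ∃ C, C.Nonempty ∧ C.card ≤ ∑ i, m i ∧ IsTWClosed Z m C := by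
  set C₀ := univ.biUnion fun i => P i \ Q i
  have hQP (i : ι) : Q i \ P i ⊆ C₀ := fun k hk => by
    obtain ⟨hkQ, hkP⟩ := mem_sdiff.mp hk
    obtain ⟨s, hs⟩ := hP.exists_mem (hQ.subset i hkQ)
    have hsi : s ≠ i := fun h => hkP (h ▸ hs)
    exact mem_biUnion.mpr
      ⟨s, mem_univ s, mem_sdiff.mpr ⟨hs, fun h => hsi (hQ.eq_of_mem h hkQ)⟩⟩
  -- `C₀` meets `Z i` in `P i \ Q i` and in `Q i \ P i`, two sets of the same size.
  have hrow (i : ι) : (P i \ Q i).card + twDeficit Z m C₀ i ≤ m i := by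
    have hswap : (P i \ Q i).card = (Q i \ P i).card :=
      card_sdiff_eq_card_sdiff_iff.mpr ((hP.card_eq i).trans (hQ.card_eq i).symm)
    have hsplit : (P i \ Q i).card + (Q i \ P i).card ≤ (Z i ∩ C₀).card := by
      rw [← card_union_of_disjoint disjoint_sdiff_sdiff]
      refine card_le_card (union_subset ?_ ?_) <;> intro k hk <;> refine mem_inter.mpr ⟨?_, ?_⟩
      · exact hPZ i (sdiff_subset hk)
      · exact mem_biUnion.mpr ⟨i, mem_univ i, hk⟩
      · exact hQZ i (sdiff_subset hk)
      · exact hQP i hk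
    have := card_le_card (sdiff_subset : P i \ Q i ⊆ P i)
    rw [hP.card_eq] at this
    unfold twDeficit
    omega
  obtain ⟨i, hi⟩ := Function.ne_iff.mp hne
  obtain ⟨k, hk⟩ : (P i \ Q i).Nonempty := sdiff_nonempty.mpr fun h =>
    hi (eq_of_subset_of_card_le h ((hQ.card_eq i).trans (hP.card_eq i).symm).le)
  obtain ⟨C, hsub, hC, hcl⟩ := exists_isTWClosed_superset hZ C₀
  refine ⟨C, ⟨k, hsub (mem_biUnion.mpr ⟨i, mem_univ i, hk⟩)⟩, hC.trans ?_, hcl⟩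
  rw [card_biUnion fun i _ j _ hij => (hP.pairwise_disjoint hij).mono sdiff_subset sdiff_subset,
    ← sum_add_distrib]
  exact sum_le_sum fun i _ => hrow i

end Closure

theorem exists_pos_forall_le_of_pos {ι : Type*} [Finite ι] (f : ι → ℝ) :
    ∃ ε > 0, ∀ i, 0 < f i → ε ≤ f i := by
  have hall : ∀ᶠ ε in nhdsWithin (0 : ℝ) (Set.Ioi 0), ∀ i, 0 < f i → ε ≤ f i :=
    Filter.eventually_all.mpr fun i => by
      by_cases hi : 0 < f i
      · exact ((eventually_le_nhds hi).filter_mono nhdsWithin_le_nhds).mono fun ε h _ => h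
      · exact Filter.Eventually.of_forall fun ε h => absurd h hi
  exact (eventually_mem_nhdsWithin.and hall).exists

section Matrices

variable {M N K : ℕ}

theorem isTWPartition_iff {m : Fin M → ℕ} {P : Fin M → Finset (Fin N)} :
    IsTWPartition m P ↔ IsTWPartitionOn m univ P := by
  refine ⟨fun ⟨hcard, huniq⟩ => ⟨hcard, fun i i' hne => disjoint_left.mpr fun k hk hk' =>
      hne ((huniq k).unique hk hk'), eq_univ_of_forall fun k => ?_⟩,
    fun h => ⟨h.card_eq, fun k => ?_⟩⟩
  · obtain ⟨i, hi, -⟩ := huniq k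
    exact mem_biUnion.mpr ⟨i, mem_univ i, hi⟩
  · obtain ⟨i, hi⟩ := h.exists_mem (mem_univ k)
    exact ⟨i, hi, fun i' hi' => h.eq_of_mem hi' hi⟩

theorem bijOn_map_succAboveEmb (m : Fin M → ℕ) (j : Fin (K + 1)) :
    Set.BijOn (fun P i => (P i).map j.succAboveEmb) {P | IsTWPartition m P}
      {Q | IsTWPartitionOn m (univ.erase j) Q} := by
  have hU : (univ : Finset (Fin K)).map j.succAboveEmb = univ.erase j := by
    rw [Fin.univ_succAbove K j, erase_cons]
  refine ⟨fun P hP => hU ▸ (isTWPartition_iff.mp hP).map _, fun P _ Q _ hPQ => ?_,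
    fun Q hQ => ?_⟩
  · exact funext fun i => map_injective _ (congrFun hPQ i)
  · obtain ⟨P, hP, rfl⟩ := (hU ▸ hQ : IsTWPartitionOn m _ Q).exists_map_eq
    exact ⟨P, isTWPartition_iff.mpr hP, rfl⟩

theorem partSum_map_succAboveEmb (A : Fin M → Fin (K + 1) → ℝ) (j : Fin (K + 1))
    (P : Fin M → Finset (Fin K)) :
    partSum A (fun i => (P i).map j.succAboveEmb) = partSum (minorMatrix A j) P := by
  simp [partSum, minorMatrix]

noncomputable def twPermOn (m : Fin M → ℕ) (A : Fin M → Fin N → ℝ) (U : Finset (Fin N)) :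
    ℝ :=
  sInf (partSum A '' {P | IsTWPartitionOn m U P})

section TWPermOn

variable {m : Fin M → ℕ} {A : Fin M → Fin N → ℝ} {U : Finset (Fin N)}
  {P : Fin M → Finset (Fin N)}

theorem twPermOn_le (hP : IsTWPartitionOn m U P) : twPermOn m A U ≤ partSum A P :=
  csInf_le (Set.toFinite _).bddBelow ⟨P, hP, rfl⟩

theorem twPermOn_eq_of_forall_le (hP : IsTWPartitionOn m U P)
    (hopt : ∀ R, IsTWPartitionOn m U R → partSum A P ≤ partSum A R) :
    twPermOn m A U = partSum A P :=
  IsLeast.csInf_eq ⟨⟨P, hP, rfl⟩, by rintro _ ⟨R, hR, rfl⟩; exact hopt R hR⟩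

theorem exists_partSum_eq_twPermOn (A : Fin M → Fin N → ℝ) (hU : ∑ i, m i = U.card) :
    ∃ P, IsTWPartitionOn m U P ∧ partSum A P = twPermOn m A U := by
  obtain ⟨P₀, hP₀⟩ := exists_isTWPartitionOn m hU
  exact (Set.Nonempty.csInf_mem ⟨_, P₀, hP₀, rfl⟩ (Set.toFinite _) : twPermOn m A U ∈ _)

theorem twPerm_eq_twPermOn_univ : twPerm m A = twPermOn m A univ := by
  simp only [twPerm, twPermOn, isTWPartition_iff]

end TWPermOn

section Minors

variable {m : Fin M → ℕ} {A : Fin M → Fin (K + 1) → ℝ} {j : Fin (K + 1)}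

theorem maxMinor_eq_twPermOn : maxMinor m A j = twPermOn m A (univ.erase j) := by
  rw [maxMinor, twPerm, twPermOn, ← (bijOn_map_succAboveEmb m j).image_eq, Set.image_image]
  simp only [partSum_map_succAboveEmb]

theorem twSingular_minorMatrix_iff :
    TWSingular m (minorMatrix A j) ↔ ∃ P Q, IsTWPartitionOn m (univ.erase j) P ∧
      IsTWPartitionOn m (univ.erase j) Q ∧ P ≠ Q ∧
      partSum A P = maxMinor m A j ∧ partSum A Q = maxMinor m A j := by
  have hΦ := bijOn_map_succAboveEmb m j
  simp only [maxMinor, twPerm_eq_twPermOn_univ]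
  constructor
  · rintro ⟨P, Q, hP, hQ, hne, heq, hopt⟩
    have hmin := twPermOn_eq_of_forall_le (isTWPartition_iff.mp hP)
      fun R hR => hopt R (isTWPartition_iff.mpr hR)
    refine ⟨_, _, hΦ.mapsTo hP, hΦ.mapsTo hQ, fun h => hne (hΦ.injOn hP hQ h), ?_, ?_⟩ <;>
      simp only [partSum_map_succAboveEmb, hmin, heq]
  · rintro ⟨P, Q, hP, hQ, hne, hPeq, hQeq⟩
    obtain ⟨P', hP', rfl⟩ := hΦ.surjOn hP
    obtain ⟨Q', hQ', rfl⟩ := hΦ.surjOn hQ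
    rw [partSum_map_succAboveEmb] at hPeq hQeq
    exact ⟨P', Q', hP', hQ', fun h => hne (h ▸ rfl), hPeq.trans hQeq.symm,
      fun R hR => hPeq ▸ twPermOn_le (isTWPartition_iff.mp hR)⟩

end Minors

section Kernel

variable {m : Fin M → ℕ}

noncomputable def twArgmin (A : Fin M → Fin N → ℝ) (x : Fin N → ℝ) (i : Fin M) :
    Finset (Fin N) :=
  univ.filter fun j => ∀ k, x j + A i j ≤ x k + A i k

theorem inTWKernel_iff {A : Fin M → Fin N → ℝ} {x : Fin N → ℝ} :
    InTWKernel m A x ↔ ∀ i, m i + 1 ≤ (twArgmin A x i).card := by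
  simp only [InTWKernel, twArgmin, ← Set.ncard_coe_finset, coe_filter, mem_univ, true_and]

theorem card_erase_eq_sum (hw : ∑ i, m i = K) (j : Fin (K + 1)) :
    ∑ i, m i = (univ.erase j).card := by
  simp [card_erase_of_mem, hw]

theorem inTWKernel_maxMinor (A : Fin M → Fin (K + 1) → ℝ) (hw : ∑ i, m i = K) :
    InTWKernel m A (maxMinor m A) := by
  rw [inTWKernel_iff]
  intro i
  obtain ⟨j, -, hj⟩ := exists_min_image univ (fun k => maxMinor m A k + A i k) univ_nonempty
  obtain ⟨P, hP, hPy⟩ := exists_partSum_eq_twPermOn A (card_erase_eq_sum hw j)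
  rw [← maxMinor_eq_twPermOn] at hPy
  have hjP : j ∉ P i := fun h => ne_of_mem_erase (hP.subset i h) rfl
  have hsub : insert j (P i) ⊆ twArgmin A (maxMinor m A) i := by
    refine insert_subset (by simpa [twArgmin] using hj) fun k hk => ?_
    have hkj : k ≠ j := fun h => hjP (h ▸ hk)
    obtain ⟨hQ, hQsum⟩ := hP.swap (G := ℝ) hk (notMem_erase j univ)
    rw [erase_right_comm, insert_erase (mem_erase.mpr ⟨hkj.symm, mem_univ j⟩)] at hQ
    have hyk : maxMinor m A k ≤ maxMinor m A j + A i j - A i k := by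
      rw [← hPy, partSum, ← hQsum A, maxMinor_eq_twPermOn]
      exact twPermOn_le hQ
    simp only [twArgmin, mem_filter, mem_univ, true_and]
    exact fun l => by linarith [hj l (mem_univ l)]
  calc m i + 1 = (insert j (P i)).card := by rw [card_insert_of_notMem hjP, hP.card_eq]
    _ ≤ _ := card_le_card hsub

end Kernel

section Reduced

variable [NeZero N] {m : Fin M → ℕ} {A : Fin M → Fin N → ℝ} {x : Fin N → ℝ}

noncomputable def rowMin (A : Fin M → Fin N → ℝ) (x : Fin N → ℝ) (i : Fin M) : ℝ :=
  univ.inf' univ_nonempty fun k => x k + A i k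

noncomputable def reducedMatrix (A : Fin M → Fin N → ℝ) (x : Fin N → ℝ) :
    Fin M → Fin N → ℝ :=
  fun i k => x k + A i k - rowMin A x i

theorem reducedMatrix_nonneg (i : Fin M) (k : Fin N) : 0 ≤ reducedMatrix A x i k :=
  sub_nonneg.mpr (inf'_le _ (mem_univ k))

theorem reducedMatrix_eq_zero_iff {i : Fin M} {k : Fin N} :
    reducedMatrix A x i k = 0 ↔ k ∈ twArgmin A x i := by
  simp only [reducedMatrix, twArgmin, rowMin, sub_eq_zero, mem_filter, mem_univ, true_and]
  exact ⟨fun h l => h ▸ inf'_le _ (mem_univ l),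
    fun h => le_antisymm (le_inf' _ _ fun l _ => h l) (inf'_le _ (mem_univ k))⟩

theorem partSum_reducedMatrix (A : Fin M → Fin N → ℝ) (x : Fin N → ℝ) {U : Finset (Fin N)}
    {P : Fin M → Finset (Fin N)} (hP : IsTWPartitionOn m U P) :
    partSum (reducedMatrix A x) P = partSum A P + ∑ k ∈ U, x k - ∑ i, m i * rowMin A x i := by
  simp only [partSum, reducedMatrix, sum_sub_distrib, sum_add_distrib, hP.sum_eq, sum_const,
    hP.card_eq, nsmul_eq_mul]
  ring

theorem subset_twArgmin_of_partSum_reducedMatrix_nonpos {P : Fin M → Finset (Fin N)}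
    (hP : partSum (reducedMatrix A x) P ≤ 0) (i : Fin M) : P i ⊆ twArgmin A x i := by
  have hrow (i : Fin M) : 0 ≤ ∑ k ∈ P i, reducedMatrix A x i k :=
    sum_nonneg fun k _ => reducedMatrix_nonneg i k
  have h0 := (sum_eq_zero_iff_of_nonneg fun i _ => hrow i).mp
    (le_antisymm hP (sum_nonneg fun i _ => hrow i)) i (mem_univ i)
  exact fun k hk => reducedMatrix_eq_zero_iff.mp
    ((sum_eq_zero_iff_of_nonneg fun k _ => reducedMatrix_nonneg i k).mp h0 k hk)

end Reduced

section Uniqueness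

variable {m : Fin M → ℕ} {A : Fin M → Fin (K + 1) → ℝ} {x : Fin (K + 1) → ℝ}

theorem maxMinor_sub_le_of_not_twSingular (hw : ∑ i, m i = K) (hx : InTWKernel m A x)
    {j₁ : Fin (K + 1)} (hns : ¬ TWSingular m (minorMatrix A j₁)) (j₂ : Fin (K + 1)) :
    maxMinor m A j₂ - x j₂ ≤ maxMinor m A j₁ - x j₁ := by
  obtain ⟨P, hP, hPy⟩ := exists_partSum_eq_twPermOn A (card_erase_eq_sum hw j₁)
  rw [← maxMinor_eq_twPermOn] at hPy
  have hZ : ∀ i, m i < (twArgmin A x i).card := fun i => inTWKernel_iff.mp hx i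
  have hzero : ∀ i, ∀ k ∈ twArgmin A x i, reducedMatrix A x i k = 0 :=
    fun i k hk => reducedMatrix_eq_zero_iff.mpr hk
  have hPB := partSum_reducedMatrix A x hP
  by_cases hall : ∀ S : Finset (Fin M),
      ∑ i ∈ S, m i ≤ (S.biUnion fun i => (P i ∪ twArgmin A x i).erase j₂).card
  · obtain ⟨Q, hQcard, hQdisj, hQC⟩ := exists_disjoint_blocks_of_hall m _ hall
    have hQ : IsTWPartitionOn m (univ.erase j₂) Q := .of_disjoint hQcard hQdisj
      (fun i => (hQC i).trans (erase_subset_erase _ (subset_univ _))) (card_erase_eq_sum hw j₂)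
    have hQP : partSum (reducedMatrix A x) Q ≤ partSum (reducedMatrix A x) P :=
      sum_le_sum fun i _ => sum_le_sum_of_subset_union_of_eq_zero (reducedMatrix_nonneg i)
        (hzero i) ((hQC i).trans (erase_subset _ _))
    have hQB := partSum_reducedMatrix A x hQ
    rw [sum_erase_eq_sub (mem_univ _)] at hPB hQB
    have hQy : maxMinor m A j₂ ≤ partSum A Q := maxMinor_eq_twPermOn ▸ twPermOn_le hQ
    linarith
  · obtain ⟨S, hS⟩ := not_forall.mp hall
    rw [not_le] at hS
    obtain ⟨hSne, hSZ⟩ := hP.exists_mem_sdiff_of_card_lt hZ hS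
    obtain ⟨P', hP', hne, hle⟩ := hP.exists_ne_sum_le reducedMatrix_nonneg hSne
      fun i hi => (hSZ i hi).imp fun k ⟨hkS, hkP, hkZ⟩ => ⟨hkS, hkP, hzero i k hkZ⟩
    have hle' : partSum (reducedMatrix A x) P' ≤ partSum (reducedMatrix A x) P := hle
    have hP'B := partSum_reducedMatrix A x hP'
    have hP'y : maxMinor m A j₁ ≤ partSum A P' := maxMinor_eq_twPermOn ▸ twPermOn_le hP'
    exact absurd (twSingular_minorMatrix_iff.mpr
      ⟨P', P, hP', hP, hne, by linarith, hPy⟩) hns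

theorem eq_maxMinor_add_const (hw : ∑ i, m i = K)
    (hns : ∀ j, ¬ TWSingular m (minorMatrix A j)) (hx : InTWKernel m A x) :
    ∃ c, x = fun j => maxMinor m A j + c :=
  ⟨x 0 - maxMinor m A 0, funext fun j => by
    linarith [maxMinor_sub_le_of_not_twSingular hw hx (hns 0) j,
      maxMinor_sub_le_of_not_twSingular hw hx (hns j) 0]⟩

end Uniqueness

section Perturbation

variable [NeZero N] {m : Fin M → ℕ} {A : Fin M → Fin N → ℝ} {x : Fin N → ℝ}

theorem InTWKernel.exists_ne_add_const (hx : InTWKernel m A x) {C : Finset (Fin N)}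
    (hC : C.Nonempty) (hCU : C ≠ univ) (hcl : IsTWClosed (twArgmin A x) m C) :
    ∃ x', InTWKernel m A x' ∧ ∀ c, x' ≠ fun j => x j + c := by
  obtain ⟨ε, hε, hεle⟩ := exists_pos_forall_le_of_pos fun p : Fin M × Fin N =>
    reducedMatrix A x p.1 p.2
  set x' : Fin N → ℝ := fun k => x k + if k ∈ C then 0 else ε
  have hval (i : Fin M) (k : Fin N) :
      x' k + A i k = rowMin A x i + reducedMatrix A x i k + if k ∈ C then 0 else ε := by
    simp only [x', reducedMatrix]
    ring
  have hgap (i : Fin M) (k : Fin N) (hk : k ∉ twArgmin A x i) : ε ≤ reducedMatrix A x i k :=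
    hεle (i, k) ((reducedMatrix_nonneg i k).lt_of_ne
      (Ne.symm (mt reducedMatrix_eq_zero_iff.mp hk)))
  have hB (i : Fin M) (k : Fin N) : 0 ≤ reducedMatrix A x i k := reducedMatrix_nonneg i k
  refine ⟨x', inTWKernel_iff.mpr fun i => ?_, fun c hc => ?_⟩
  · rcases hcl i with h | h
    · refine (inTWKernel_iff.mp hx i).trans (card_le_card fun k hk => ?_)
      have hkC : k ∉ C := fun hkC => (card_pos.mpr ⟨k, mem_inter.mpr ⟨hk, hkC⟩⟩).ne' h
      simp only [twArgmin, mem_filter, mem_univ, true_and, hval, if_neg hkC,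
        reducedMatrix_eq_zero_iff.mpr hk]
      intro l
      by_cases hlC : l ∈ C
      · have hlZ : l ∉ twArgmin A x i := fun hlZ =>
          (card_pos.mpr ⟨l, mem_inter.mpr ⟨hlZ, hlC⟩⟩).ne' h
        simp only [if_pos hlC]
        linarith [hgap i l hlZ]
      · simp only [if_neg hlC]
        linarith [hB i l]
    · refine h.trans (card_le_card fun k hk => ?_)
      obtain ⟨hkZ, hkC⟩ := mem_inter.mp hk
      simp only [twArgmin, mem_filter, mem_univ, true_and, hval, if_pos hkC,
        reducedMatrix_eq_zero_iff.mpr hkZ]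
      intro l
      split_ifs <;> linarith [hB i l]
  · obtain ⟨k, hk⟩ := hC
    obtain ⟨l, -, hl⟩ :=
      exists_mem_notMem_of_card_lt_card (card_lt_card (ssubset_univ_iff.mpr hCU))
    have hk' := congrFun hc k
    have hl' := congrFun hc l
    simp only [x', if_pos hk, if_neg hl] at hk' hl'
    linarith

end Perturbation

section Singular

variable {m : Fin M → ℕ} {A : Fin M → Fin (K + 1) → ℝ}

theorem sum_maxMinor_le_of_hall (hw : ∑ i, m i = K)
    (hall : ∀ S : Finset (Fin M),
      ∑ i ∈ S, m i ≤ (S.biUnion (twArgmin A (maxMinor m A))).card) :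
    ∑ k, maxMinor m A k ≤ ∑ i, m i * rowMin A (maxMinor m A) i := by
  obtain ⟨G, hGcard, hGdisj, hGZ⟩ := exists_disjoint_blocks_of_hall m _ hall
  have hcard : (univ.biUnion G).card < (univ : Finset (Fin (K + 1))).card := by
    rw [card_biUnion (hGdisj.set_pairwise _)]
    simp [hGcard, hw]
  obtain ⟨j, -, hj⟩ := exists_mem_notMem_of_card_lt_card hcard
  have hG : IsTWPartitionOn m (univ.erase j) G := .of_disjoint hGcard hGdisj
    (fun i k hk => mem_erase.mpr ⟨fun h => hj (h ▸ mem_biUnion.mpr ⟨i, mem_univ i, hk⟩),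
      mem_univ k⟩) (card_erase_eq_sum hw j)
  have h0 : partSum (reducedMatrix A (maxMinor m A)) G = 0 :=
    sum_eq_zero fun i _ => sum_eq_zero fun k hk => reducedMatrix_eq_zero_iff.mpr (hGZ i hk)
  have hGB := partSum_reducedMatrix A (maxMinor m A) hG
  rw [sum_erase_eq_sub (mem_univ _)] at hGB
  have hGy : maxMinor m A j ≤ partSum A G := maxMinor_eq_twPermOn ▸ twPermOn_le hG
  linarith

theorem exists_inTWKernel_ne_of_twSingular (hw : ∑ i, m i = K) {j₀ : Fin (K + 1)}
    (hs : TWSingular m (minorMatrix A j₀)) :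
    ∃ x, InTWKernel m A x ∧ ∀ c, x ≠ fun j => maxMinor m A j + c := by
  have hy := inTWKernel_maxMinor A hw
  have hZ : ∀ i, m i < (twArgmin A (maxMinor m A) i).card := inTWKernel_iff.mp hy
  suffices ∃ C, C.Nonempty ∧ C.card ≤ ∑ i, m i ∧
      IsTWClosed (twArgmin A (maxMinor m A)) m C by
    obtain ⟨C, hC, hCcard, hcl⟩ := this
    refine hy.exists_ne_add_const hC (fun h => ?_) hcl
    rw [h, card_univ, Fintype.card_fin, hw] at hCcard
    omega
  by_cases hall : ∀ S : Finset (Fin M),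
      ∑ i ∈ S, m i ≤ (S.biUnion (twArgmin A (maxMinor m A))).card
  · obtain ⟨P, Q, hP, hQ, hne, hPy, hQy⟩ := twSingular_minorMatrix_iff.mp hs
    have hopt (R : Fin M → Finset (Fin (K + 1))) (hR : IsTWPartitionOn m (univ.erase j₀) R)
        (hRy : partSum A R = maxMinor m A j₀) (i : Fin M) :
        R i ⊆ twArgmin A (maxMinor m A) i := by
      refine subset_twArgmin_of_partSum_reducedMatrix_nonpos ?_ i
      have hRB := partSum_reducedMatrix A (maxMinor m A) hR
      rw [sum_erase_eq_sub (mem_univ _)] at hRB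
      linarith [sum_maxMinor_le_of_hall hw hall]
    exact hP.exists_isTWClosed_of_ne hZ hQ hne (hopt P hP hPy) (hopt Q hQ hQy)
  · obtain ⟨R, hR⟩ := not_forall.mp hall
    exact exists_isTWClosed_of_card_biUnion_lt hZ (not_le.mp hR)

end Singular

end Matrices

theorem tw_cramer_general {M K : ℕ} (m : Fin M → ℕ) (A : Fin M → Fin (K + 1) → ℝ)
    (hw : ∑ i, m i = K) :
    InTWKernel m A (fun j => maxMinor m A j) ∧
      ((∀ x : Fin (K + 1) → ℝ, InTWKernel m A x →
          ∃ c : ℝ, x = fun j => maxMinor m A j + c) ↔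
        ∀ j : Fin (K + 1), ¬ TWSingular m (minorMatrix A j)) := by
  refine ⟨inTWKernel_maxMinor A hw, fun huniq j hs => ?_,
    fun hns x hx => eq_maxMinor_add_const hw hns hx⟩
  obtain ⟨x, hx, hne⟩ := exists_inTWKernel_ne_of_twSingular hw hs
  obtain ⟨c, hc⟩ := huniq x hx
  exact hne c hc

/-- Tropical weighted Cramer's rule.  For an `(N-1) × N` tw-matrix `A` (total weight `N-1`),
the vector of maximal tw-minors lies in the tw-kernel of `A`, and every vector in the
tw-kernel of `A` equals that vector plus a constant multiple of `(1, …, 1)` iff every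
maximal tw-minor of `A` is tw-nonsingular. -/
theorem tw_cramer {M K : ℕ} (m : Fin M → ℕ) (A : Fin M → Fin (K + 1) → ℝ)
    (hm : ∀ i, 1 ≤ m i) (hw : ∑ i, m i = K) :
    InTWKernel m A (fun j => maxMinor m A j) ∧
      ((∀ x : Fin (K + 1) → ℝ, InTWKernel m A x →
          ∃ c : ℝ, x = fun j => maxMinor m A j + c) ↔
        ∀ j : Fin (K + 1), ¬ TWSingular m (minorMatrix A j)) :=
  tw_cramer_general m A hw
end

section
/- Let a be a saturated tropical polynomial with support Δ and dual complex 𝒫 = 𝒫_a. Let x_1, …, x_K ∈ ℝⁿ and positive integers m_1, …, m_K be such that V(a) has multiplicity at least m_i at x_i for each i, and no two of the x_i lie in the relative interior of the same polyhedron of 𝒯_a. Define a weighting μ of 𝒫 by μ(conv(B(x_i))) = m_i for each i and μ(P) = 0 for all other members P of 𝒫. Then the following are equivalent: (1) every saturated tropical polynomial a' with support Δ such that V(a') has multiplicity at least m_i at x_i for each i satisfies a' = a + c·(1, …, 1) for some c ∈ ℝ; (2) μ is rigid. -/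
open Set
open scoped Classical

/-- A point of `ℝⁿ` with integer coordinates. -/
def IsLatticePoint {n : ℕ} (x : Fin n → ℝ) : Prop := ∀ i, ∃ z : ℤ, x i = (z : ℝ)

/-- The lattice points of a subset of `ℝⁿ`. -/
def latticePts {n : ℕ} (P : Set (Fin n → ℝ)) : Set (Fin n → ℝ) :=
  {x ∈ P | IsLatticePoint x}

/-- A lattice polytope: the convex hull of finitely many lattice points. -/
def IsLatticePolytope {n : ℕ} (P : Set (Fin n → ℝ)) : Prop :=
  ∃ S : Finset (Fin n → ℝ), (∀ x ∈ S, IsLatticePoint x) ∧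
    P = convexHull ℝ (S : Set (Fin n → ℝ))

/-- The inclusion of `ℤⁿ` in `ℝⁿ`. -/
def toR {n : ℕ} (I : Fin n → ℤ) : Fin n → ℝ := fun k => (I k : ℝ)

/-- `I · x`. -/
def dotIR {n : ℕ} (I : Fin n → ℤ) (x : Fin n → ℝ) : ℝ := ∑ k, (I k : ℝ) * x k

/-- `B(x)`: the set of exponents `I ∈ L(Δ)` at which `a_I + I · x` is minimal. -/
noncomputable def Bset {n : ℕ} (LΔ : Finset (Fin n → ℤ)) (a : (Fin n → ℤ) → ℝ)
    (x : Fin n → ℝ) : Finset (Fin n → ℤ) :=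
  LΔ.filter fun I => ∀ J ∈ LΔ, a I + dotIR I x ≤ a J + dotIR J x

/-- `a` is saturated: every exponent attains the minimum somewhere. -/
def Saturated {n : ℕ} (LΔ : Finset (Fin n → ℤ)) (a : (Fin n → ℤ) → ℝ) : Prop :=
  ∀ I ∈ LΔ, ∃ x : Fin n → ℝ, I ∈ Bset LΔ a x

/-- The member `conv(B(x))` of the dual complex. -/
noncomputable def dualCell {n : ℕ} (LΔ : Finset (Fin n → ℤ)) (a : (Fin n → ℤ) → ℝ)
    (x : Fin n → ℝ) : Set (Fin n → ℝ) :=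
  convexHull ℝ (toR '' (Bset LΔ a x : Set (Fin n → ℤ)))

/-- The dual complex `𝒫_a`: all polytopes `conv(B(x))`, `x ∈ ℝⁿ`. -/
def dualComplex {n : ℕ} (LΔ : Finset (Fin n → ℤ)) (a : (Fin n → ℤ) → ℝ) :
    Set (Set (Fin n → ℝ)) :=
  {S | ∃ x : Fin n → ℝ, S = dualCell LΔ a x}

/-- The vertices (`0`-dimensional members) of a collection of polytopes. -/
def vertexSet {n : ℕ} (cplx : Set (Set (Fin n → ℝ))) : Set (Fin n → ℝ) :=
  {x | ({x} : Set (Fin n → ℝ)) ∈ cplx}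

/-- `L` is deformable with respect to `μ`. -/
def Deformable {n : ℕ} (Δ : Set (Fin n → ℝ)) (cplx : Set (Set (Fin n → ℝ)))
    (μ : Set (Fin n → ℝ) → ℤ) (L : Set (Fin n → ℝ)) : Prop :=
  L.Nonempty ∧ L ⊆ latticePts Δ ∧ ¬ vertexSet cplx ⊆ L ∧
    ∀ P ∈ cplx, P ∩ L = ∅ ∨ μ P + 1 ≤ ((P ∩ L).ncard : ℤ)

/-- `μ` is rigid if no `L` is deformable. -/
def Rigid {n : ℕ} (Δ : Set (Fin n → ℝ)) (cplx : Set (Set (Fin n → ℝ)))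
    (μ : Set (Fin n → ℝ) → ℤ) : Prop :=
  ¬ ∃ L, Deformable Δ cplx μ L


/-!
If a second saturated polynomial `a'` passes through the points with the same multiplicities
but is not a shift of `a`, the exponents where `a' - a` is minimal form a deformable set: at
each `x i` the minimal exponents of `a'` lie in `B(x i)` and in that set, while the cell of
`a` at a point where a maximizer of `a' - a` is minimal for `a'` consists of maximizers, so
its vertices lie outside the set.

Conversely, lowering `a` by a small `t > 0` on a deformable set `S` keeps at least `m i + 1`
minimal exponents at each `x i`: those in `S` if the cell meets `S`, all of `B(x i)`
otherwise. The lower convex envelope of the lowered coefficients is saturated (by Farkas'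
lemma, which needs the closedness of finitely generated cones), keeps these exponents minimal,
and is not a shift of `a`: it agrees with `a` at a vertex outside `S` but not on `S`.
-/

open Filter Topology

variable {n : ℕ} {LΔ : Finset (Fin n → ℤ)} {a : (Fin n → ℤ) → ℝ}

section Basic

lemma toR_injective : Function.Injective (toR (n := n)) := fun I J h =>
  funext fun k => Int.cast_injective (congrFun h k : (I k : ℝ) = J k)

lemma dotIR_eq_dotProduct (I : Fin n → ℤ) (x : Fin n → ℝ) : dotIR I x = toR I ⬝ᵥ x := rfl

lemma continuous_dotIR (I : Fin n → ℤ) : Continuous (dotIR I) := by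
  unfold dotIR
  fun_prop

lemma exists_toR_eq_of_isLatticePoint {z : Fin n → ℝ} (hz : IsLatticePoint z) :
    ∃ I, toR I = z := by
  choose I hI using hz
  exact ⟨I, funext fun k => (hI k).symm⟩

lemma ncard_image_toR (T : Finset (Fin n → ℤ)) : (toR '' (T : Set (Fin n → ℤ))).ncard = T.card := by
  rw [Set.ncard_image_of_injective _ toR_injective, Set.ncard_coe_finset]

lemma mem_Bset {x : Fin n → ℝ} {I : Fin n → ℤ} :
    I ∈ Bset LΔ a x ↔ I ∈ LΔ ∧ ∀ J ∈ LΔ, a I + dotIR I x ≤ a J + dotIR J x :=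
  Finset.mem_filter

lemma Bset_subset (x : Fin n → ℝ) : Bset LΔ a x ⊆ LΔ := Finset.filter_subset _ _

lemma Bset_nonempty (hLΔ : LΔ.Nonempty) (x : Fin n → ℝ) : (Bset LΔ a x).Nonempty := by
  obtain ⟨I, hI, hmin⟩ := LΔ.exists_min_image (fun J => a J + dotIR J x) hLΔ
  exact ⟨I, mem_Bset.2 ⟨hI, hmin⟩⟩

lemma eq_of_mem_Bset {x : Fin n → ℝ} {J K : Fin n → ℤ} (hJ : J ∈ Bset LΔ a x)
    (hK : K ∈ Bset LΔ a x) : a J + dotIR J x = a K + dotIR K x :=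
  le_antisymm ((mem_Bset.1 hJ).2 K (mem_Bset.1 hK).1) ((mem_Bset.1 hK).2 J (mem_Bset.1 hJ).1)

lemma sub_le_sub_of_mem_Bset {a' : (Fin n → ℤ) → ℝ} {y : Fin n → ℝ} {J K : Fin n → ℤ}
    (hJ : J ∈ Bset LΔ a' y) (hK : K ∈ Bset LΔ a y) : a' J - a J ≤ a' K - a K := by
  have h₁ := (mem_Bset.1 hJ).2 K (mem_Bset.1 hK).1
  have h₂ := (mem_Bset.1 hK).2 J (mem_Bset.1 hJ).1
  linarith

end Basic

section DualCells

lemma toR_mem_dualCell {x : Fin n → ℝ} {I : Fin n → ℤ} (hI : I ∈ Bset LΔ a x) :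
    toR I ∈ dualCell LΔ a x :=
  subset_convexHull ℝ _ ⟨I, hI, rfl⟩

/-- If `I` is minimal at `y`, the linear function `J ↦ J · (y - x)` is bounded below on `B(x)`,
hence on its convex hull, by `a_I + I · y - val(a, x)`; at `I` this bound says that `I` is
minimal at `x`. -/
lemma mem_Bset_of_toR_mem_dualCell (hsat : Saturated LΔ a) {x : Fin n → ℝ} {I : Fin n → ℤ}
    (hI : I ∈ LΔ) (hx : toR I ∈ dualCell LΔ a x) : I ∈ Bset LΔ a x := by
  obtain ⟨y, hy⟩ := hsat I hI
  obtain ⟨M, hM⟩ := Bset_nonempty (a := a) ⟨I, hI⟩ x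
  set v := a M + dotIR M x
  have hlin : IsLinearMap ℝ fun z : Fin n → ℝ => z ⬝ᵥ (y - x) :=
    ⟨fun u w => add_dotProduct u w _, fun c u => smul_dotProduct c u _⟩
  have hhull : dualCell LΔ a x ⊆ {z | a I + dotIR I y - v ≤ z ⬝ᵥ (y - x)} := by
    refine convexHull_min ?_ (convex_halfSpace_ge hlin _)
    rintro _ ⟨J, hJ, rfl⟩
    have h₁ := (mem_Bset.1 hy).2 J (mem_Bset.1 hJ).1
    have h₂ := eq_of_mem_Bset hJ hM
    simp only [Set.mem_ofPred_eq, dotProduct_sub, ← dotIR_eq_dotProduct]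
    linarith
  have hIx : a I + dotIR I x ≤ v := by
    have h := hhull hx
    simp only [Set.mem_ofPred_eq, dotProduct_sub, ← dotIR_eq_dotProduct] at h
    linarith
  exact mem_Bset.2 ⟨hI, fun K hK => hIx.trans ((mem_Bset.1 hM).2 K hK)⟩

lemma Bset_eq_of_dualCell_eq (hsat : Saturated LΔ a) {x y : Fin n → ℝ}
    (h : dualCell LΔ a x = dualCell LΔ a y) : Bset LΔ a x = Bset LΔ a y := by
  ext I
  constructor <;> intro hI <;>
    exact mem_Bset_of_toR_mem_dualCell hsat (mem_Bset.1 hI).1 (h ▸ toR_mem_dualCell hI)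

lemma dualCell_inter_image (hsat : Saturated LΔ a) {S : Finset (Fin n → ℤ)} (hS : S ⊆ LΔ)
    (x : Fin n → ℝ) :
    dualCell LΔ a x ∩ toR '' (S : Set (Fin n → ℤ)) =
      toR '' ((Bset LΔ a x ∩ S : Finset (Fin n → ℤ)) : Set (Fin n → ℤ)) := by
  ext z
  simp only [Set.mem_inter_iff, Set.mem_image, Finset.coe_inter, Finset.mem_coe]
  constructor
  · rintro ⟨hz, I, hIS, rfl⟩
    exact ⟨I, ⟨mem_Bset_of_toR_mem_dualCell hsat (hS hIS) hz, hIS⟩, rfl⟩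
  · rintro ⟨I, ⟨hIB, hIS⟩, rfl⟩
    exact ⟨toR_mem_dualCell hIB, I, hIS, rfl⟩

lemma mem_vertexSet_dualComplex {z : Fin n → ℝ} :
    z ∈ vertexSet (dualComplex LΔ a) ↔ ∃ J, (∃ y, Bset LΔ a y = {J}) ∧ toR J = z := by
  constructor
  · rintro ⟨y, hy⟩
    have hmem : ∀ K ∈ Bset LΔ a y, toR K = z := fun K hK => by
      simpa [← hy] using toR_mem_dualCell hK
    obtain ⟨J, hJ⟩ : (Bset LΔ a y).Nonempty := by
      by_contra h
      simp [dualCell, Finset.not_nonempty_iff_eq_empty.1 h] at hy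
    refine ⟨J, ⟨y, Finset.eq_singleton_iff_unique_mem.2 ⟨hJ, fun K hK => ?_⟩⟩, hmem J hJ⟩
    exact toR_injective ((hmem K hK).trans (hmem J hJ).symm)
  · rintro ⟨J, ⟨y, hy⟩, rfl⟩
    exact ⟨y, by simp [dualCell, hy]⟩

end DualCells

section Perturbation

lemma eventually_Bset_subset {α : Type*} {l : Filter α} {A : α → (Fin n → ℤ) → ℝ}
    {X : α → Fin n → ℝ} {x : Fin n → ℝ} (hA : ∀ J ∈ LΔ, Tendsto (fun t => A t J) l (𝓝 (a J)))
    (hX : Tendsto X l (𝓝 x)) : ∀ᶠ t in l, Bset LΔ (A t) (X t) ⊆ Bset LΔ a x := by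
  have hval : ∀ J ∈ LΔ, Tendsto (fun t => A t J + dotIR J (X t)) l (𝓝 (a J + dotIR J x)) :=
    fun J hJ => (hA J hJ).add (((continuous_dotIR J).tendsto x).comp hX)
  have hbeaten : ∀ K ∈ LΔ \ Bset LΔ a x,
      ∀ᶠ t in l, ∃ M ∈ LΔ, A t M + dotIR M (X t) < A t K + dotIR K (X t) := by
    intro K hK
    obtain ⟨hK, hKB⟩ := Finset.mem_sdiff.1 hK
    obtain ⟨M, hM⟩ := Bset_nonempty (a := a) ⟨K, hK⟩ x
    have hlt : a M + dotIR M x < a K + dotIR K x := by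
      refine lt_of_le_of_ne ((mem_Bset.1 hM).2 K hK) fun h => hKB (mem_Bset.2 ⟨hK, ?_⟩)
      exact fun Q hQ => h ▸ (mem_Bset.1 hM).2 Q hQ
    exact ((hval M (mem_Bset.1 hM).1).eventually_lt (hval K hK) hlt).mono
      fun t ht => ⟨M, (mem_Bset.1 hM).1, ht⟩
  filter_upwards [(Filter.eventually_all_finset _).2 hbeaten] with t ht J hJ
  by_contra hJB
  obtain ⟨M, hM, hlt⟩ := ht J (Finset.mem_sdiff.2 ⟨(mem_Bset.1 hJ).1, hJB⟩)
  exact (mem_Bset.1 hJ).2 M hM |>.not_gt hlt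

lemma dotProduct_lt_of_ne {ι : Type*} [Fintype ι] {u v : ι → ℝ} (huv : u ≠ v)
    (h : u ⬝ᵥ u ≤ v ⬝ᵥ v) : u ⬝ᵥ v < v ⬝ᵥ v := by
  have hpos : 0 < (u - v) ⬝ᵥ (u - v) := by
    simpa using (Matrix.dotProduct_self_star_pos_iff (v := u - v)).2 (sub_ne_zero.2 huv)
  simp only [sub_dotProduct, dotProduct_sub, dotProduct_comm v u] at hpos
  linarith

/-- Moving `y` slightly in the direction `-J`, for the exponent `J ∈ B(y)` of largest norm,
leaves `J` as the only minimal exponent. -/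
lemma exists_vertex_mem_Bset (hLΔ : LΔ.Nonempty) (y : Fin n → ℝ) :
    ∃ J ∈ Bset LΔ a y, ∃ y', Bset LΔ a y' = {J} := by
  obtain ⟨J, hJ, hJmax⟩ :=
    (Bset LΔ a y).exists_max_image (fun K => toR K ⬝ᵥ toR K) (Bset_nonempty hLΔ y)
  have hY : Tendsto (fun t : ℝ => y - t • toR J) (𝓝[>] 0) (𝓝 y) := by
    have : Continuous fun t : ℝ => y - t • toR J := by fun_prop
    simpa using (this.tendsto 0).mono_left nhdsWithin_le_nhds
  obtain ⟨t, hsub, ht⟩ := ((eventually_Bset_subset (a := a) (fun K _ => tendsto_const_nhds)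
    hY).and self_mem_nhdsWithin).exists
  refine ⟨J, hJ, y - t • toR J, Finset.eq_singleton_iff_nonempty_unique_mem.2
    ⟨Bset_nonempty hLΔ _, fun K hK => ?_⟩⟩
  by_contra hKJ
  have hlt : toR K ⬝ᵥ toR J < toR J ⬝ᵥ toR J :=
    dotProduct_lt_of_ne (toR_injective.ne hKJ) (hJmax K (hsub hK))
  have h₁ := (mem_Bset.1 hK).2 J (mem_Bset.1 hJ).1
  have h₂ := eq_of_mem_Bset (hsub hK) hJ
  simp only [dotIR_eq_dotProduct, dotProduct_sub, dotProduct_smul, smul_eq_mul] at h₁ h₂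
  linarith [mul_lt_mul_of_pos_left hlt (show (0 : ℝ) < t from ht)]

/-- After lowering `a` by a small `t > 0` on `S`, the exponents of `B(x)` in `S` (or all of
`B(x)` if none is in `S`) stay minimal at `x`. -/
lemma eventually_mem_Bset_lower (S : Finset (Fin n → ℤ)) (x : Fin n → ℝ) :
    ∀ᶠ t in 𝓝[>] (0 : ℝ), ∀ J ∈ Bset LΔ a x, (∀ K ∈ Bset LΔ a x, K ∈ S → J ∈ S) →
      J ∈ Bset LΔ (fun K => if K ∈ S then a K - t else a K) x := by
  have hA : ∀ K ∈ LΔ, Tendsto (fun t : ℝ => if K ∈ S then a K - t else a K) (𝓝[>] 0)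
      (𝓝 (a K)) := by
    intro K _
    have : Continuous fun t : ℝ => if K ∈ S then a K - t else a K := by
      split_ifs <;> fun_prop
    simpa using (this.tendsto 0).mono_left nhdsWithin_le_nhds
  filter_upwards [eventually_Bset_subset hA tendsto_const_nhds, self_mem_nhdsWithin]
    with t hsub ht J hJ hJS
  obtain ⟨M, hM⟩ := Bset_nonempty (a := fun K => if K ∈ S then a K - t else a K)
    ⟨J, (mem_Bset.1 hJ).1⟩ x
  refine mem_Bset.2 ⟨(mem_Bset.1 hJ).1, fun K hK => le_trans ?_ ((mem_Bset.1 hM).2 K hK)⟩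
  have hJM := eq_of_mem_Bset hJ (hsub hM)
  have ht₀ : (0 : ℝ) < t := ht
  by_cases hMS : M ∈ S
  · simp only [if_pos (hJS M (hsub hM) hMS), if_pos hMS]
    linarith
  · simp only [if_neg hMS]
    split_ifs <;> linarith

end Perturbation

section Farkas

variable {E : Type*} [NormedAddCommGroup E] [NormedSpace ℝ E] {ι : Type*} [Fintype ι]

def conicHull (w : ι → E) : Set E := Fintype.linearCombination ℝ w '' Set.Ici 0

lemma convex_conicHull (w : ι → E) : Convex ℝ (conicHull w) :=
  (convex_Ici 0).linear_image _

lemma zero_mem_conicHull (w : ι → E) : (0 : E) ∈ conicHull w :=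
  ⟨0, Set.mem_Ici.2 le_rfl, map_zero _⟩

lemma smul_mem_conicHull {w : ι → E} {z : E} (hz : z ∈ conicHull w) {t : ℝ} (ht : 0 ≤ t) :
    t • z ∈ conicHull w := by
  obtain ⟨l, hl, rfl⟩ := hz
  exact ⟨t • l, Set.mem_Ici.2 (smul_nonneg ht hl), map_smul _ _ _⟩

/-- Conic Carathéodory step: along a linear relation among the generators, a nonnegative
combination can be moved until one coefficient vanishes. -/
lemma conicHull_subset_iUnion [DecidableEq ι] {w : ι → E} (hw : ¬ LinearIndependent ℝ w) :
    conicHull w ⊆ ⋃ j : ι, conicHull fun i : {i : ι // i ≠ j} => w i := by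
  rintro _ ⟨l, hl, rfl⟩
  obtain ⟨g, hg, i₀, hi₀⟩ : ∃ g : ι → ℝ, ∑ i, g i • w i = 0 ∧ ∃ i, 0 < g i := by
    obtain ⟨g, hg, i, hi⟩ := Fintype.not_linearIndependent_iff.1 hw
    rcases hi.lt_or_gt with hneg | hpos
    · exact ⟨-g, by simp [neg_smul, hg], i, by simpa using hneg⟩
    · exact ⟨g, hg, i, hpos⟩
  obtain ⟨j, hj, hjmin⟩ := (Finset.univ.filter fun i => 0 < g i).exists_min_image
    (fun i => l i / g i) ⟨i₀, by simpa using hi₀⟩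
  have hgj : 0 < g j := (Finset.mem_filter.1 hj).2
  set l' := l - (l j / g j) • g
  have hl' : 0 ≤ l' := fun i => by
    have ht : 0 ≤ l j / g j := div_nonneg (hl j) hgj.le
    show 0 ≤ l i - l j / g j * g i
    rcases lt_or_ge 0 (g i) with hgi | hgi
    · have := (le_div_iff₀ hgi).1 (hjmin i (by simpa using hgi))
      linarith
    · linarith [mul_nonpos_of_nonneg_of_nonpos ht hgi, show 0 ≤ l i from hl i]
  have hl'j : l' j = 0 := by
    show l j - l j / g j * g j = 0
    rw [div_mul_cancel₀ _ hgj.ne', sub_self]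
  have hcomb : Fintype.linearCombination ℝ w l' = Fintype.linearCombination ℝ w l := by
    rw [map_sub, map_smul, Fintype.linearCombination_apply ℝ w g, hg, smul_zero, sub_zero]
  refine Set.mem_iUnion.2 ⟨j, fun i => l' i, fun i => hl' i, ?_⟩
  rw [← hcomb, Fintype.linearCombination_apply, Fintype.linearCombination_apply,
    Fintype.sum_eq_add_sum_subtype_ne _ j, hl'j, zero_smul, zero_add]

lemma conicHull_subtype_ne_subset [DecidableEq ι] (w : ι → E) (j : ι) :
    (conicHull fun i : {i : ι // i ≠ j} => w i) ⊆ conicHull w := by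
  rintro _ ⟨l, hl, rfl⟩
  refine ⟨fun i => if h : i ≠ j then l ⟨i, h⟩ else 0, fun i => ?_, ?_⟩
  · dsimp only
    split_ifs
    exacts [hl _, le_rfl]
  · simp only [Fintype.linearCombination_apply]
    rw [Fintype.sum_eq_add_sum_subtype_ne _ j]
    simp only [ne_eq, not_true_eq_false, dite_false, zero_smul, zero_add]
    exact Finset.sum_congr rfl fun i _ => by rw [dif_pos i.2]

theorem isClosed_conicHull (w : ι → E) : IsClosed (conicHull w) := by
  classical
  induction h : Fintype.card ι using Nat.strong_induction_on generalizing ι with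
  | _ k ih =>
    by_cases hw : LinearIndependent ℝ w
    · exact (LinearMap.isClosedEmbedding_of_injective
        (LinearMap.ker_eq_bot.2 hw.fintypeLinearCombination_injective)).isClosedMap _ isClosed_Ici
    · have heq : conicHull w = ⋃ j : ι, conicHull fun i : {i : ι // i ≠ j} => w i :=
        (conicHull_subset_iUnion hw).antisymm
          (Set.iUnion_subset fun j => conicHull_subtype_ne_subset w j)
      rw [heq]
      exact isClosed_iUnion_of_finite fun j =>
        ih _ (h ▸ Fintype.card_subtype_lt (not_not.2 rfl)) _ rfl

/-- Farkas' lemma, by separating `(0, 1)` from the closed cone generated by the `(v i, β i)`. -/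
theorem exists_strongDual_of_farkas (v : ι → E) (β : ι → ℝ)
    (h : ∀ l : ι → ℝ, 0 ≤ l → ∑ i, l i • v i = 0 → ∑ i, l i * β i ≤ 0) :
    ∃ f : StrongDual ℝ E, ∀ i, β i ≤ f (v i) := by
  set w : ι → E × ℝ := fun i => (v i, β i)
  have hp : ((0 : E), (1 : ℝ)) ∉ conicHull w := by
    rintro ⟨l, hl, hlp⟩
    simp only [Fintype.linearCombination_apply, w, Prod.ext_iff, Prod.fst_sum, Prod.snd_sum,
      Prod.smul_fst, Prod.smul_snd, smul_eq_mul] at hlp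
    linarith [h l hl hlp.1]
  obtain ⟨f, u, hfu, hup⟩ :=
    geometric_hahn_banach_closed_point (convex_conicHull w) (isClosed_conicHull w) hp
  have hu : 0 < u := by simpa using hfu 0 (zero_mem_conicHull w)
  have hf : ∀ z ∈ conicHull w, f z ≤ 0 := fun z hz => by
    by_contra! hz'
    have := hfu _ (smul_mem_conicHull hz (div_nonneg hu.le hz'.le))
    rw [map_smul, smul_eq_mul, div_mul_cancel₀ _ hz'.ne'] at this
    exact this.false
  set r := f ((0 : E), (1 : ℝ))
  have hr : 0 < r := hu.trans hup
  refine ⟨-r⁻¹ • f.comp (ContinuousLinearMap.inl ℝ E ℝ), fun i => ?_⟩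
  have hi : f (v i, 0) + β i * r ≤ 0 := by
    have hsplit : (v i, β i) = (v i, (0 : ℝ)) + β i • ((0 : E), (1 : ℝ)) := by simp
    have := hf (w i) ⟨Pi.single i 1, by simp [Pi.single_nonneg], by simp [w]⟩
    rwa [show w i = (v i, β i) from rfl, hsplit, map_add, map_smul, smul_eq_mul] at this
  show β i ≤ -r⁻¹ * f (v i, 0)
  rw [neg_mul, le_neg, ← div_eq_inv_mul, div_le_iff₀ hr]
  linarith

end Farkas

section LowerHull

/-- The values at `I` of the affine functions `J ↦ s + (I - J) · y` lying below `c` on `LΔ`. -/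
def minorantValues (LΔ : Finset (Fin n → ℤ)) (c : (Fin n → ℤ) → ℝ) (I : Fin n → ℤ) : Set ℝ :=
  {s | ∃ y, ∀ J ∈ LΔ, s + dotIR I y ≤ c J + dotIR J y}

/-- The lower convex envelope of `c` on `LΔ`. -/
noncomputable def lowerHull (LΔ : Finset (Fin n → ℤ)) (c : (Fin n → ℤ) → ℝ)
    (I : Fin n → ℤ) : ℝ :=
  sSup (minorantValues LΔ c I)

variable {c : (Fin n → ℤ) → ℝ} {I : Fin n → ℤ}

lemma minorantValues_nonempty : (minorantValues LΔ c I).Nonempty := by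
  refine ⟨-∑ J ∈ LΔ, |c J|, 0, fun J hJ => ?_⟩
  have := Finset.single_le_sum (fun K _ => abs_nonneg (c K)) hJ
  simp only [dotIR, Pi.zero_apply, mul_zero, Finset.sum_const_zero, add_zero]
  linarith [neg_abs_le (c J)]

lemma le_self_of_mem_minorantValues (hI : I ∈ LΔ) {s : ℝ} (hs : s ∈ minorantValues LΔ c I) :
    s ≤ c I := by
  obtain ⟨y, hy⟩ := hs
  simpa using hy I hI

lemma lowerHull_le_self (hI : I ∈ LΔ) : lowerHull LΔ c I ≤ c I :=
  csSup_le minorantValues_nonempty fun _ => le_self_of_mem_minorantValues hI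

lemma le_lowerHull (hI : I ∈ LΔ) {s : ℝ} {y : Fin n → ℝ}
    (h : ∀ J ∈ LΔ, s + dotIR I y ≤ c J + dotIR J y) : s ≤ lowerHull LΔ c I :=
  le_csSup ⟨c I, fun _ => le_self_of_mem_minorantValues hI⟩ ⟨y, h⟩

lemma sum_mul_le_of_mem_minorantValues {l : LΔ → ℝ} (hl : 0 ≤ l)
    (hrel : ∑ J, l J • (toR (J : Fin n → ℤ) - toR I) = 0) {s : ℝ}
    (hs : s ∈ minorantValues LΔ c I) : (∑ J, l J) * s ≤ ∑ J, l J * c J := by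
  obtain ⟨y, hy⟩ := hs
  have hzero : ∑ J : LΔ, l J * (toR (J : Fin n → ℤ) - toR I) ⬝ᵥ y = 0 := by
    simp only [← smul_eq_mul, ← smul_dotProduct, ← sum_dotProduct, hrel, zero_dotProduct]
  have hle : ∑ J : LΔ, (l J * s - l J * c J) ≤
      ∑ J : LΔ, l J * (toR (J : Fin n → ℤ) - toR I) ⬝ᵥ y := by
    refine Finset.sum_le_sum fun J _ => ?_
    have := mul_le_mul_of_nonneg_left
      (show s - c J ≤ dotIR J y - dotIR I y by linarith [hy J J.2]) (hl J)
    simp only [sub_dotProduct, ← dotIR_eq_dotProduct]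
    linarith
  rw [hzero, Finset.sum_sub_distrib, ← Finset.sum_mul] at hle
  linarith

lemma sum_mul_lowerHull_le {l : LΔ → ℝ} (hl : 0 ≤ l)
    (hrel : ∑ J, l J • (toR (J : Fin n → ℤ) - toR I) = 0) :
    (∑ J, l J) * lowerHull LΔ c I ≤ ∑ J, l J * c J := by
  rcases (Finset.sum_nonneg fun J _ => hl J : 0 ≤ ∑ J, l J).eq_or_lt with hzero | hpos
  · have hl0 : ∀ J, l J = 0 := fun J =>
      (Finset.sum_eq_zero_iff_of_nonneg fun J _ => hl J).1 hzero.symm J (Finset.mem_univ J)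
    simp [hl0]
  · rw [← le_div_iff₀' hpos]
    exact csSup_le minorantValues_nonempty fun s hs =>
      (le_div_iff₀' hpos).2 (sum_mul_le_of_mem_minorantValues hl hrel hs)

lemma strongDual_apply_eq_dotProduct (f : StrongDual ℝ (Fin n → ℝ)) (z : Fin n → ℝ) :
    f z = z ⬝ᵥ fun k => f fun j => if k = j then 1 else 0 :=
  LinearMap.pi_apply_eq_sum_univ (f : (Fin n → ℝ) →ₗ[ℝ] ℝ) z

lemma exists_lowerHull_add_le (LΔ : Finset (Fin n → ℤ)) (c : (Fin n → ℤ) → ℝ) (I : Fin n → ℤ) :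
    ∃ y, ∀ J ∈ LΔ, lowerHull LΔ c I + dotIR I y ≤ c J + dotIR J y := by
  obtain ⟨f, hf⟩ := exists_strongDual_of_farkas (fun J : LΔ => toR (J : Fin n → ℤ) - toR I)
    (fun J => lowerHull LΔ c I - c J) fun l hl hrel => by
      simp only [mul_sub, Finset.sum_sub_distrib, ← Finset.sum_mul, sub_nonpos]
      exact sum_mul_lowerHull_le hl hrel
  refine ⟨fun k => f fun j => if k = j then 1 else 0, fun J hJ => ?_⟩
  have := hf ⟨J, hJ⟩
  rw [strongDual_apply_eq_dotProduct, sub_dotProduct, ← dotIR_eq_dotProduct,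
    ← dotIR_eq_dotProduct] at this
  linarith

lemma saturated_lowerHull : Saturated LΔ (lowerHull LΔ c) := by
  intro I hI
  obtain ⟨y, hy⟩ := exists_lowerHull_add_le LΔ c I
  refine ⟨y, mem_Bset.2 ⟨hI, fun J hJ => ?_⟩⟩
  have := le_lowerHull (c := c) (s := lowerHull LΔ c I + dotIR I y - dotIR J y) (y := y) hJ
    fun K hK => by linarith [hy K hK]
  linarith

lemma Bset_subset_Bset_lowerHull (x : Fin n → ℝ) :
    Bset LΔ c x ⊆ Bset LΔ (lowerHull LΔ c) x := by
  intro I hI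
  obtain ⟨hILΔ, hImin⟩ := mem_Bset.1 hI
  refine mem_Bset.2 ⟨hILΔ, fun J hJ => ?_⟩
  have := le_lowerHull (c := c) (s := c I + dotIR I x - dotIR J x) (y := x) hJ fun K hK => by
    linarith [hImin K hK]
  linarith [lowerHull_le_self (c := c) hILΔ]

lemma lowerHull_eq_of_mem_Bset {x : Fin n → ℝ} (hI : I ∈ Bset LΔ c x) :
    lowerHull LΔ c I = c I :=
  (lowerHull_le_self (mem_Bset.1 hI).1).antisymm
    (le_lowerHull (mem_Bset.1 hI).1 (mem_Bset.1 hI).2)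

end LowerHull

section Deformations

variable {Δ : Set (Fin n → ℝ)} {μ : Set (Fin n → ℝ) → ℤ}

/-- Deformability of `toR '' S` in terms of exponents: for saturated `a` the cell `conv(B(y))`
meets `toR '' S` in `toR '' (B(y) ∩ S)` (`dualCell_inter_image`). -/
def DeformableExponents (LΔ : Finset (Fin n → ℤ)) (a : (Fin n → ℤ) → ℝ)
    (μ : Set (Fin n → ℝ) → ℤ) (S : Finset (Fin n → ℤ)) : Prop :=
  S.Nonempty ∧ (∃ J ∉ S, ∃ y, Bset LΔ a y = {J}) ∧
    ∀ y, Bset LΔ a y ∩ S = ∅ ∨ μ (dualCell LΔ a y) + 1 ≤ ((Bset LΔ a y ∩ S).card : ℤ)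

lemma image_toR_subset_latticePts (hLΔ : ∀ I, I ∈ LΔ ↔ toR I ∈ Δ) {S : Finset (Fin n → ℤ)}
    (hS : S ⊆ LΔ) : toR '' (S : Set (Fin n → ℤ)) ⊆ latticePts Δ := by
  rintro _ ⟨I, hI, rfl⟩
  exact ⟨(hLΔ I).1 (hS hI), fun k => ⟨I k, rfl⟩⟩

lemma image_toR_filter_eq (hLΔ : ∀ I, I ∈ LΔ ↔ toR I ∈ Δ) {L : Set (Fin n → ℝ)}
    (hL : L ⊆ latticePts Δ) : toR '' ((LΔ.filter fun I => toR I ∈ L : Finset _) : Set _) = L := by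
  ext z
  constructor
  · rintro ⟨I, hI, rfl⟩
    exact (Finset.mem_filter.1 hI).2
  · intro hz
    obtain ⟨hzΔ, hzlat⟩ := hL hz
    obtain ⟨I, rfl⟩ := exists_toR_eq_of_isLatticePoint hzlat
    exact ⟨I, Finset.mem_filter.2 ⟨(hLΔ I).2 hzΔ, hz⟩, rfl⟩

lemma deformable_image_iff (hLΔ : ∀ I, I ∈ LΔ ↔ toR I ∈ Δ) (hsat : Saturated LΔ a)
    {S : Finset (Fin n → ℤ)} (hS : S ⊆ LΔ) :
    Deformable Δ (dualComplex LΔ a) μ (toR '' (S : Set (Fin n → ℤ))) ↔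
      DeformableExponents LΔ a μ S := by
  have hvert : ¬ vertexSet (dualComplex LΔ a) ⊆ toR '' (S : Set (Fin n → ℤ)) ↔
      ∃ J ∉ S, ∃ y, Bset LΔ a y = {J} := by
    rw [Set.not_subset]
    constructor
    · rintro ⟨z, hz, hzS⟩
      obtain ⟨J, hJ, rfl⟩ := mem_vertexSet_dualComplex.1 hz
      exact ⟨J, fun h => hzS ⟨J, h, rfl⟩, hJ⟩
    · rintro ⟨J, hJS, hJ⟩
      exact ⟨toR J, mem_vertexSet_dualComplex.2 ⟨J, hJ, rfl⟩,
        fun ⟨K, hK, hKJ⟩ => hJS (toR_injective hKJ ▸ hK)⟩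
  have hcell : ∀ y, dualCell LΔ a y ∩ toR '' (S : Set (Fin n → ℤ)) = ∅ ∨
      μ (dualCell LΔ a y) + 1 ≤ ((dualCell LΔ a y ∩ toR '' (S : Set (Fin n → ℤ))).ncard : ℤ) ↔
      Bset LΔ a y ∩ S = ∅ ∨ μ (dualCell LΔ a y) + 1 ≤ ((Bset LΔ a y ∩ S).card : ℤ) := fun y => by
    rw [dualCell_inter_image hsat hS, ncard_image_toR, Set.image_eq_empty, Finset.coe_eq_empty]
  simp only [Deformable, DeformableExponents, Set.image_nonempty, Finset.coe_nonempty,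
    image_toR_subset_latticePts hLΔ hS, true_and]
  exact and_congr_right fun _ => and_congr hvert
    ⟨fun h y => (hcell y).1 (h _ ⟨y, rfl⟩), fun h _ ⟨y, hy⟩ => hy ▸ (hcell y).2 (h y)⟩

lemma rigid_iff (hLΔ : ∀ I, I ∈ LΔ ↔ toR I ∈ Δ) (hsat : Saturated LΔ a) :
    Rigid Δ (dualComplex LΔ a) μ ↔ ∀ S ⊆ LΔ, ¬ DeformableExponents LΔ a μ S := by
  constructor
  · intro h S hS hdef
    exact h ⟨_, (deformable_image_iff hLΔ hsat hS).2 hdef⟩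
  · rintro h ⟨L, hL⟩
    rw [← image_toR_filter_eq hLΔ hL.2.1] at hL
    exact h _ (Finset.filter_subset _ _)
      ((deformable_image_iff hLΔ hsat (Finset.filter_subset _ _)).1 hL)

lemma Bset_subset_inter_filter {a' : (Fin n → ℤ) → ℝ} {x : Fin n → ℝ} {K : Fin n → ℤ}
    (hK : K ∈ Bset LΔ a x) (hmin : ∀ J ∈ LΔ, a' K - a K ≤ a' J - a J) :
    Bset LΔ a' x ⊆ Bset LΔ a x ∩ LΔ.filter fun I => ∀ J ∈ LΔ, a' I - a I ≤ a' J - a J := by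
  intro J hJ
  have hJK := sub_le_sub_of_mem_Bset hJ hK
  have hKJ := hmin J (mem_Bset.1 hJ).1
  refine Finset.mem_inter.2 ⟨mem_Bset.2 ⟨(mem_Bset.1 hJ).1, fun Q hQ => ?_⟩,
    Finset.mem_filter.2 ⟨(mem_Bset.1 hJ).1, fun Q hQ => hJK.trans (hmin Q hQ)⟩⟩
  linarith [(mem_Bset.1 hJ).2 K (mem_Bset.1 hK).1, (mem_Bset.1 hK).2 Q hQ]

theorem deformableExponents_of_not_unique (hsat : Saturated LΔ a) {K : ℕ}
    {x : Fin K → Fin n → ℝ} {m : Fin K → ℕ} (hμ₁ : ∀ i, μ (dualCell LΔ a (x i)) = m i)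
    (hμ₀ : ∀ P ∈ dualComplex LΔ a, (∀ i, P ≠ dualCell LΔ a (x i)) → μ P = 0)
    {a' : (Fin n → ℤ) → ℝ} (hsat' : Saturated LΔ a')
    (hmult' : ∀ i, m i + 1 ≤ (Bset LΔ a' (x i)).card)
    (hnc : ¬ ∃ c : ℝ, ∀ I ∈ LΔ, a' I = a I + c) :
    DeformableExponents LΔ a μ (LΔ.filter fun I => ∀ J ∈ LΔ, a' I - a I ≤ a' J - a J) := by
  have hLΔ : LΔ.Nonempty := by
    by_contra h
    exact hnc ⟨0, by simp [Finset.not_nonempty_iff_eq_empty.1 h]⟩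
  refine ⟨?_, ?_, fun y => ?_⟩
  · obtain ⟨I, hI, hmin⟩ := LΔ.exists_min_image (fun I => a' I - a I) hLΔ
    exact ⟨I, Finset.mem_filter.2 ⟨hI, hmin⟩⟩
  · obtain ⟨J₁, hJ₁, hmax⟩ := LΔ.exists_max_image (fun I => a' I - a I) hLΔ
    obtain ⟨y₁, hy₁⟩ := hsat' J₁ hJ₁
    obtain ⟨J, hJ, y', hy'⟩ := exists_vertex_mem_Bset (a := a) hLΔ y₁
    refine ⟨J, fun hJS => hnc ⟨a' J - a J, fun I hI => ?_⟩, y', hy'⟩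
    linarith [sub_le_sub_of_mem_Bset hy₁ hJ, (Finset.mem_filter.1 hJS).2 I hI, hmax I hI]
  · rcases (Bset LΔ a y ∩ _).eq_empty_or_nonempty with h | ⟨K₀, hK₀⟩
    · exact Or.inl h
    right
    obtain ⟨hK₀B, hK₀S⟩ := Finset.mem_inter.1 hK₀
    by_cases hcell : ∃ i, dualCell LΔ a y = dualCell LΔ a (x i)
    · obtain ⟨i, hi⟩ := hcell
      rw [Bset_eq_of_dualCell_eq hsat hi] at hK₀B ⊢
      rw [hi, hμ₁ i]
      exact_mod_cast (hmult' i).trans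
        (Finset.card_le_card (Bset_subset_inter_filter hK₀B (Finset.mem_filter.1 hK₀S).2))
    · rw [hμ₀ _ ⟨y, rfl⟩ fun i hi => hcell ⟨i, hi⟩]
      exact_mod_cast Finset.card_pos.2 ⟨K₀, hK₀⟩

/-- A deformable `S` yields a second saturated polynomial through the points: lower `a` by a
small `t` on `S` and take the lower convex envelope. -/
theorem exists_not_unique_of_deformableExponents {K : ℕ} {x : Fin K → Fin n → ℝ}
    {m : Fin K → ℕ} (hmult : ∀ i, m i + 1 ≤ (Bset LΔ a (x i)).card)
    (hμ₁ : ∀ i, μ (dualCell LΔ a (x i)) = m i) {S : Finset (Fin n → ℤ)} (hS : S ⊆ LΔ)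
    (hdef : DeformableExponents LΔ a μ S) :
    ∃ a' : (Fin n → ℤ) → ℝ, Saturated LΔ a' ∧ (∀ i, m i + 1 ≤ (Bset LΔ a' (x i)).card) ∧
      ¬ ∃ c : ℝ, ∀ I ∈ LΔ, a' I = a I + c := by
  obtain ⟨⟨I₁, hI₁⟩, ⟨J₀, hJ₀S, y₀, hy₀⟩, hcells⟩ := hdef
  obtain ⟨t, ⟨hx, hy⟩, ht⟩ := (((Filter.eventually_all.2 fun i =>
    eventually_mem_Bset_lower (LΔ := LΔ) (a := a) S (x i)).and
    (eventually_mem_Bset_lower S y₀)).and self_mem_nhdsWithin).exists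
  set c : (Fin n → ℤ) → ℝ := fun K => if K ∈ S then a K - t else a K
  refine ⟨lowerHull LΔ c, saturated_lowerHull, fun i => ?_, ?_⟩
  · refine le_trans ?_ (Finset.card_le_card (Bset_subset_Bset_lowerHull (x i)))
    rcases hcells (x i) with hempty | hcard
    · refine (hmult i).trans (Finset.card_le_card fun J hJ => hx i J hJ fun K hK hKS => ?_)
      exact absurd (hempty ▸ Finset.mem_inter.2 ⟨hK, hKS⟩) (Finset.notMem_empty K)
    · rw [hμ₁ i] at hcard
      refine (by exact_mod_cast hcard : m i + 1 ≤ _).trans (Finset.card_le_card fun J hJ => ?_)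
      exact hx i J (Finset.mem_inter.1 hJ).1 fun _ _ _ => (Finset.mem_inter.1 hJ).2
  · rintro ⟨c₀, hc₀⟩
    have hJ₀ : J₀ ∈ Bset LΔ c y₀ := hy J₀ (by simp [hy₀]) fun K hK hKS => by
      rw [hy₀, Finset.mem_singleton] at hK
      exact hK ▸ hKS
    have h₀ := hc₀ J₀ (Bset_subset y₀ (hy₀ ▸ Finset.mem_singleton_self J₀))
    have h₁ := hc₀ I₁ (hS hI₁)
    have h₂ := lowerHull_le_self (c := c) (hS hI₁)
    rw [lowerHull_eq_of_mem_Bset hJ₀] at h₀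
    simp only [c, if_neg hJ₀S] at h₀
    simp only [c, if_pos hI₁] at h₂
    linarith [show (0 : ℝ) < t from ht]

end Deformations

theorem unique_hypersurface_iff_rigid_general {n K : ℕ}
    (Δ : Set (Fin n → ℝ)) (LΔ : Finset (Fin n → ℤ)) (a : (Fin n → ℤ) → ℝ)
    (hLΔ : ∀ I : Fin n → ℤ, I ∈ LΔ ↔ toR I ∈ Δ)
    (hsat : Saturated LΔ a)
    (x : Fin K → Fin n → ℝ) (m : Fin K → ℕ)
    (hmult : ∀ i, m i + 1 ≤ (Bset LΔ a (x i)).card)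
    (μ : Set (Fin n → ℝ) → ℤ)
    (hμ₁ : ∀ i, μ (dualCell LΔ a (x i)) = m i)
    (hμ₀ : ∀ P ∈ dualComplex LΔ a, (∀ i, P ≠ dualCell LΔ a (x i)) → μ P = 0) :
    ((∀ a' : (Fin n → ℤ) → ℝ, Saturated LΔ a' →
        (∀ i, m i + 1 ≤ (Bset LΔ a' (x i)).card) →
        ∃ c : ℝ, ∀ I ∈ LΔ, a' I = a I + c) ↔
      Rigid Δ (dualComplex LΔ a) μ) := by
  rw [rigid_iff hLΔ hsat]
  constructor
  · intro hunique S hS hdef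
    obtain ⟨a', hsat', hmult', hnc⟩ :=
      exists_not_unique_of_deformableExponents hmult hμ₁ hS hdef
    exact hnc (hunique a' hsat' hmult')
  · intro hrigid a' hsat' hmult'
    by_contra hnc
    exact hrigid _ (Finset.filter_subset _ _)
      (deformableExponents_of_not_unique hsat hμ₁ hμ₀ hsat' hmult' hnc)

/-- Points with multiplicities on a tropical hypersurface determine it uniquely iff the
induced weighting of the dual complex is rigid. -/
theorem unique_hypersurface_iff_rigid {n K : ℕ}
    (Δ : Set (Fin n → ℝ)) (LΔ : Finset (Fin n → ℤ)) (a : (Fin n → ℤ) → ℝ)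
    (hΔ : IsLatticePolytope Δ)
    (hLΔ : ∀ I : Fin n → ℤ, I ∈ LΔ ↔ toR I ∈ Δ)
    (hsat : Saturated LΔ a)
    (x : Fin K → Fin n → ℝ) (m : Fin K → ℕ) (hm : ∀ i, 1 ≤ m i)
    (hmult : ∀ i, m i + 1 ≤ (Bset LΔ a (x i)).card)
    (hdistinct : ∀ i j, i ≠ j → Bset LΔ a (x i) ≠ Bset LΔ a (x j))
    (μ : Set (Fin n → ℝ) → ℤ)
    (hμ₁ : ∀ i, μ (dualCell LΔ a (x i)) = m i)
    (hμ₀ : ∀ P ∈ dualComplex LΔ a, (∀ i, P ≠ dualCell LΔ a (x i)) → μ P = 0) :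
    ((∀ a' : (Fin n → ℤ) → ℝ, Saturated LΔ a' →
        (∀ i, m i + 1 ≤ (Bset LΔ a' (x i)).card) →
        ∃ c : ℝ, ∀ I ∈ LΔ, a' I = a I + c) ↔
      Rigid Δ (dualComplex LΔ a) μ) :=
  unique_hypersurface_iff_rigid_general Δ LΔ a hLΔ hsat x m hmult μ hμ₁ hμ₀
end

section
/- Let 𝒫 be a lattice simplicial decomposition of a lattice polytope Δ ⊂ ℝⁿ with a weighting μ. Suppose 𝒦 is the union of s distinct connected components of supp(μ), and let L = 𝒦 ∩ ℤⁿ be the set of lattice points of 𝒦. Suppose there is a deficient member P' ∈ 𝒫 with |P' ∩ L| ≥ μ(P') + 1. Then used(L) ≥ |L| − s + μ(P'). -/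
open Set

/-- The dimension of a polytope: the rank of its direction space. -/
noncomputable def polyDim {n : ℕ} (P : Set (Fin n → ℝ)) : ℕ :=
  Module.finrank ℝ (vectorSpan ℝ P)

/-- A lattice polyhedral decomposition of `Δ`. -/
def IsLatticeDecomp {n : ℕ} (Δ : Set (Fin n → ℝ)) (cplx : Finset (Set (Fin n → ℝ))) : Prop :=
  (∀ P ∈ cplx, P.Nonempty) ∧
  (∀ P ∈ cplx, IsLatticePolytope P) ∧
  (∀ P ∈ cplx, ∀ F : Set (Fin n → ℝ), IsExtreme ℝ P F → F.Nonempty → F ∈ cplx) ∧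
  (∀ P ∈ cplx, ∀ Q ∈ cplx, IsExtreme ℝ P (P ∩ Q) ∧ IsExtreme ℝ Q (P ∩ Q)) ∧
  ⋃₀ (cplx : Set (Set (Fin n → ℝ))) = Δ

/-- A weighting of `cplx`: `0 ≤ μ P ≤ |P| - 1` for all members `P`. -/
def IsWeighting {n : ℕ} (cplx : Finset (Set (Fin n → ℝ))) (μ : Set (Fin n → ℝ) → ℤ) : Prop :=
  ∀ P ∈ cplx, 0 ≤ μ P ∧ μ P ≤ ((latticePts P).ncard : ℤ) - 1

/-- `cplx` is lattice simplicial. -/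
def LatticeSimplicial {n : ℕ} (cplx : Finset (Set (Fin n → ℝ))) : Prop :=
  ∀ P ∈ cplx, (latticePts P).ncard = polyDim P + 1

/-- The support of `μ`: the union of the full members (those with `μ P = |P| - 1`). -/
def weightSupp {n : ℕ} (cplx : Finset (Set (Fin n → ℝ))) (μ : Set (Fin n → ℝ) → ℤ) :
    Set (Fin n → ℝ) :=
  ⋃₀ {P : Set (Fin n → ℝ) | P ∈ cplx ∧ μ P = ((latticePts P).ncard : ℤ) - 1}

/-- `used(L) = Σ_{P : |P ∩ L| ≥ μ(P) + 1} μ(P)`. -/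
noncomputable def usedWeight {n : ℕ} (cplx : Finset (Set (Fin n → ℝ)))
    (μ : Set (Fin n → ℝ) → ℤ) (L : Set (Fin n → ℝ)) : ℤ :=
  ∑ P ∈ cplx, if μ P + 1 ≤ ((P ∩ L).ncard : ℤ) then μ P else 0

/-!
Each chosen component `K` of `supp(μ)` is the union of the full members it contains; these are
closed, nonempty and convex, and two of them that meet share a lattice point (a vertex of their
common face). Adding the members of `K` one at a time, each meeting the union so far, a full
member `P` contributes at most `|P| - 1 = μ(P)` new lattice points, so
`|K ∩ ℤⁿ| ≤ 1 + Σ_{P ⊆ K} μ(P)`.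
Every full member inside `𝒦` and `P'` itself meet the threshold defining `used(L)`, whence
`used(L) ≥ Σ_K (|K ∩ ℤⁿ| - 1) + μ(P') ≥ |L| - s + μ(P')`.
-/

theorem Set.ncard_union_add_one_le {α : Type*} {s t : Set α} (hs : s.Finite) (ht : t.Finite)
    (hst : (s ∩ t).Nonempty) : (s ∪ t).ncard + 1 ≤ s.ncard + t.ncard := by
  have := Set.ncard_union_add_ncard_inter s t hs ht
  have := (Set.ncard_pos (hs.subset inter_subset_left)).2 hst
  omega

section LatticeCover

open Finset

variable {X : Type*} [TopologicalSpace X]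

structure IsLatticeCover (Λ : Set X) (F : Finset (Set X)) : Prop where
  isClosed : ∀ P ∈ F, IsClosed P
  nonempty : ∀ P ∈ F, P.Nonempty
  isPreconnected : ∀ P ∈ F, IsPreconnected P
  finite_inter : ∀ P ∈ F, (P ∩ Λ).Finite
  inter_nonempty : ∀ P ∈ F, ∀ Q ∈ F, (P ∩ Q).Nonempty → (P ∩ Q ∩ Λ).Nonempty

variable {Λ : Set X} {F G : Finset (Set X)}

theorem IsLatticeCover.mono (hF : IsLatticeCover Λ F) (hGF : G ⊆ F) : IsLatticeCover Λ G where
  isClosed P hP := hF.isClosed P (hGF hP)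
  nonempty P hP := hF.nonempty P (hGF hP)
  isPreconnected P hP := hF.isPreconnected P (hGF hP)
  finite_inter P hP := hF.finite_inter P (hGF hP)
  inter_nonempty P hP Q hQ := hF.inter_nonempty P (hGF hP) Q (hGF hQ)

theorem IsLatticeCover.finite_sUnion_inter (hF : IsLatticeCover Λ F) :
    (⋃₀ (F : Set (Set X)) ∩ Λ).Finite := by
  refine (F.finite_toSet.biUnion fun P hP => hF.finite_inter P hP).subset ?_
  rintro x ⟨⟨P, hP, hxP⟩, hxΛ⟩
  exact mem_biUnion hP ⟨hxP, hxΛ⟩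

theorem IsLatticeCover.exists_sdiff_inter_nonempty (hF : IsLatticeCover Λ F)
    (hconn : IsPreconnected (⋃₀ (F : Set (Set X)))) {H : Finset (Set X)} (hHF : H ⊆ F)
    (hH : H.Nonempty) (hFH : (F \ H).Nonempty) : ∃ P ∈ F \ H, ∃ Q ∈ H, (P ∩ Q).Nonempty := by
  have hclosed : ∀ G ⊆ F, IsClosed (⋃₀ (G : Set (Set X))) := fun G hGF =>
    sUnion_eq_biUnion ▸ G.finite_toSet.isClosed_biUnion fun P hP => hF.isClosed P (hGF hP)
  have hcover : ⋃₀ (F : Set (Set X)) ⊆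
      ⋃₀ (H : Set (Set X)) ∪ ⋃₀ ((F \ H : Finset _) : Set (Set X)) := by
    rintro x ⟨P, hP, hxP⟩
    by_cases hPH : P ∈ H
    · exact Or.inl ⟨P, hPH, hxP⟩
    · exact Or.inr ⟨P, mem_sdiff.2 ⟨hP, hPH⟩, hxP⟩
  have hmeets : ∀ G ⊆ F, G.Nonempty →
      (⋃₀ (F : Set (Set X)) ∩ ⋃₀ (G : Set (Set X))).Nonempty := by
    rintro G hGF ⟨P, hP⟩
    obtain ⟨x, hx⟩ := hF.nonempty P (hGF hP)
    exact ⟨x, ⟨P, hGF hP, hx⟩, P, hP, hx⟩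
  obtain ⟨x, -, ⟨Q, hQ, hxQ⟩, P, hP, hxP⟩ := isPreconnected_closed_iff.1 hconn _ _
    (hclosed H hHF) (hclosed _ sdiff_subset) hcover (hmeets H hHF hH) (hmeets _ sdiff_subset hFH)
  exact ⟨P, hP, Q, hQ, x, hxP, hxQ⟩

/-- Add the pieces of `F \ H` one at a time, each meeting the union so far: a piece `P` then
contributes at most `|P ∩ Λ| - 1` new points of `Λ`. -/
theorem IsLatticeCover.ncard_sUnion_inter_add_card_sdiff_le (hF : IsLatticeCover Λ F)
    (hconn : IsPreconnected (⋃₀ (F : Set (Set X)))) {H : Finset (Set X)} (hHF : H ⊆ F)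
    (hH : H.Nonempty) :
    (⋃₀ (F : Set (Set X)) ∩ Λ).ncard + #(F \ H) ≤
      (⋃₀ (H : Set (Set X)) ∩ Λ).ncard + ∑ P ∈ F \ H, (P ∩ Λ).ncard := by
  by_cases hFH : (F \ H).Nonempty
  · obtain ⟨P, hP, Q, hQ, hPQ⟩ := hF.exists_sdiff_inter_nonempty hconn hHF hH hFH
    have hPF := (mem_sdiff.1 hP).1
    have ih := hF.ncard_sUnion_inter_add_card_sdiff_le hconn (insert_subset hPF hHF)
      (insert_nonempty P H)
    obtain ⟨y, ⟨hyP, hyQ⟩, hyΛ⟩ := hF.inter_nonempty P hPF Q (hHF hQ) hPQ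
    have hstep : (⋃₀ ((insert P H : Finset _) : Set (Set X)) ∩ Λ).ncard + 1 ≤
        (P ∩ Λ).ncard + (⋃₀ (H : Set (Set X)) ∩ Λ).ncard := by
      rw [coe_insert, sUnion_insert, union_inter_distrib_right]
      exact Set.ncard_union_add_one_le (hF.finite_inter P hPF)
        (hF.mono hHF).finite_sUnion_inter ⟨y, ⟨hyP, hyΛ⟩, ⟨Q, hQ, hyQ⟩, hyΛ⟩
    rw [sdiff_insert] at ih
    rw [← add_sum_erase _ _ hP, ← card_erase_add_one hP]
    omega
  · rw [Finset.not_nonempty_iff_eq_empty, sdiff_eq_empty_iff_subset] at hFH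
    rw [Finset.Subset.antisymm hHF hFH]
    simp
termination_by #(F \ H)
decreasing_by
  rw [sdiff_insert]
  exact card_erase_lt_of_mem hP

theorem IsLatticeCover.ncard_sUnion_inter_add_card_le (hF : IsLatticeCover Λ F)
    (hconn : IsPreconnected (⋃₀ (F : Set (Set X)))) :
    (⋃₀ (F : Set (Set X)) ∩ Λ).ncard + #F ≤ 1 + ∑ P ∈ F, (P ∩ Λ).ncard := by
  obtain rfl | ⟨P, hP⟩ := F.eq_empty_or_nonempty
  · simp
  have h := hF.ncard_sUnion_inter_add_card_sdiff_le hconn (singleton_subset_iff.2 hP)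
    (singleton_nonempty P)
  rw [coe_singleton, sUnion_singleton, sdiff_singleton_eq_erase] at h
  rw [← add_sum_erase _ _ hP, ← card_erase_add_one hP]
  have := Set.ncard_le_ncard (inter_subset_left : P ∩ Λ ∩ P ⊆ P ∩ Λ) (hF.finite_inter P hP)
  omega

theorem connectedComponentIn_sUnion_eq {F : Set (Set X)} (hF : ∀ P ∈ F, IsPreconnected P) (x : X) :
    connectedComponentIn (⋃₀ F) x = ⋃₀ {P ∈ F | P ⊆ connectedComponentIn (⋃₀ F) x} := by
  refine Subset.antisymm (fun y hy => ?_) (sUnion_subset fun P hP => hP.2)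
  obtain ⟨P, hP, hyP⟩ := connectedComponentIn_subset _ _ hy
  refine ⟨P, ⟨hP, ?_⟩, hyP⟩
  rw [connectedComponentIn_eq hy]
  exact (hF P hP).subset_connectedComponentIn hyP (subset_sUnion_of_mem hP)

theorem connectedComponentIn_eq_of_inter_nonempty {S : Set X} {x y : X}
    (h : (connectedComponentIn S x ∩ connectedComponentIn S y).Nonempty) :
    connectedComponentIn S x = connectedComponentIn S y := by
  obtain ⟨z, hzx, hzy⟩ := h
  rw [connectedComponentIn_eq hzx, connectedComponentIn_eq hzy]

open scoped Classical in
theorem IsLatticeCover.ncard_connectedComponentIn_inter_add_card_le (hF : IsLatticeCover Λ F)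
    (x : X) :
    (connectedComponentIn (⋃₀ (F : Set (Set X))) x ∩ Λ).ncard +
        #{P ∈ F | P ⊆ connectedComponentIn (⋃₀ (F : Set (Set X))) x} ≤
      1 + ∑ P ∈ F with P ⊆ connectedComponentIn (⋃₀ (F : Set (Set X))) x, (P ∩ Λ).ncard := by
  set K := connectedComponentIn (⋃₀ (F : Set (Set X))) x
  have hK : K = ⋃₀ ((F.filter (· ⊆ K) : Finset _) : Set (Set X)) := by
    rw [coe_filter]
    exact connectedComponentIn_sUnion_eq hF.isPreconnected x
  have hconn : IsPreconnected K := isPreconnected_connectedComponentIn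
  rw [hK] at hconn
  have h := (hF.mono (filter_subset _ F)).ncard_sUnion_inter_add_card_le hconn
  rwa [← hK] at h

open scoped Classical in
theorem IsLatticeCover.ncard_iUnion_inter_add_card_le (hF : IsLatticeCover Λ F) {s : ℕ}
    {C : Fin s → Set X}
    (hC : ∀ k, ∃ x ∈ ⋃₀ (F : Set (Set X)), C k = connectedComponentIn (⋃₀ (F : Set (Set X))) x)
    (hCinj : Function.Injective C) :
    ((⋃ k, C k) ∩ Λ).ncard + #{P ∈ F | ∃ k, P ⊆ C k} ≤
      s + ∑ P ∈ F with ∃ k, P ⊆ C k, (P ∩ Λ).ncard := by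
  set S := ⋃₀ (F : Set (Set X))
  choose x _ hx using hC
  obtain rfl : C = fun k => connectedComponentIn S (x k) := funext hx
  beta_reduce
  set Fk : Fin s → Finset (Set X) := fun k => {P ∈ F | P ⊆ connectedComponentIn S (x k)}
  have hdisj : ((univ : Finset (Fin s)) : Set (Fin s)).PairwiseDisjoint Fk := by
    intro k _ j _ hkj
    refine disjoint_left.2 fun P hPk hPj => hkj (hCinj ?_)
    obtain ⟨z, hz⟩ := hF.nonempty P (mem_filter.1 hPk).1
    exact connectedComponentIn_eq_of_inter_nonempty
      ⟨z, (mem_filter.1 hPk).2 hz, (mem_filter.1 hPj).2 hz⟩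
  have hfilter : {P ∈ F | ∃ k, P ⊆ connectedComponentIn S (x k)} = univ.biUnion Fk := by
    ext P
    simp [Fk]
  rw [hfilter, card_biUnion hdisj, sum_biUnion hdisj]
  calc _ ≤ ∑ k, ((connectedComponentIn S (x k) ∩ Λ).ncard + #(Fk k)) := by
        rw [iUnion_inter, sum_add_distrib]
        gcongr
        exact ncard_iUnion_le_of_fintype _
    _ ≤ ∑ k, (1 + ∑ P ∈ Fk k, (P ∩ Λ).ncard) :=
        sum_le_sum fun k _ => hF.ncard_connectedComponentIn_inter_add_card_le (x k)
    _ = s + ∑ k, ∑ P ∈ Fk k, (P ∩ Λ).ncard := by simp [sum_add_distrib]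

end LatticeCover

section LatticePolytope

variable {n : ℕ}

theorem latticePts_eq_inter (P : Set (Fin n → ℝ)) : latticePts P = P ∩ {x | IsLatticePoint x} := rfl

theorem inter_latticePts_of_subset {P K : Set (Fin n → ℝ)} (h : P ⊆ K) :
    P ∩ latticePts K = latticePts P := by
  rw [latticePts_eq_inter, latticePts_eq_inter, ← inter_assoc, inter_eq_left.2 h]

theorem IsCompact.finite_latticePts {K : Set (Fin n → ℝ)} (hK : IsCompact K) :
    (latticePts K).Finite := by
  have hcast : Topology.IsClosedEmbedding fun (z : Fin n → ℤ) i => (z i : ℝ) :=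
    .piMap fun _ => Int.isClosedEmbedding_coe_real
  refine ((hcast.isCompact_preimage hK).finite_of_discrete.image fun z i => (z i : ℝ)).subset ?_
  rintro x ⟨hxK, hx⟩
  choose z hz using hx
  have hzx : (fun i => (z i : ℝ)) = x := funext fun i => (hz i).symm
  exact ⟨z, by rwa [mem_preimage, hzx], hzx⟩

theorem IsLatticePolytope.isCompact {P : Set (Fin n → ℝ)} (h : IsLatticePolytope P) :
    IsCompact P := by
  obtain ⟨S, -, rfl⟩ := h
  exact S.finite_toSet.isCompact_convexHull (𝕜 := ℝ)

theorem IsLatticePolytope.convex {P : Set (Fin n → ℝ)} (h : IsLatticePolytope P) :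
    Convex ℝ P := by
  obtain ⟨S, -, rfl⟩ := h
  exact convex_convexHull ℝ _

theorem IsLatticePolytope.latticePts_nonempty {P : Set (Fin n → ℝ)} (h : IsLatticePolytope P)
    (hP : P.Nonempty) : (latticePts P).Nonempty := by
  obtain ⟨S, hS, rfl⟩ := h
  obtain ⟨v, hv⟩ := convexHull_nonempty_iff.1 hP
  exact ⟨v, subset_convexHull ℝ _ hv, hS v hv⟩

/-- Two meeting members of a decomposition meet in a common face, which is again a member and so
has a lattice vertex. -/
theorem IsLatticeDecomp.isLatticeCover {Δ : Set (Fin n → ℝ)} {cplx : Finset (Set (Fin n → ℝ))}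
    (h : IsLatticeDecomp Δ cplx) : IsLatticeCover {x | IsLatticePoint x} cplx where
  isClosed P hP := (h.2.1 P hP).isCompact.isClosed
  nonempty := h.1
  isPreconnected P hP := (h.2.1 P hP).convex.isPreconnected
  finite_inter P hP := (h.2.1 P hP).isCompact.finite_latticePts
  inter_nonempty P hP Q hQ hPQ :=
    (h.2.1 _ (h.2.2.1 P hP _ (h.2.2.2.1 P hP Q hQ).1 hPQ)).latticePts_nonempty hPQ

end LatticePolytope

theorem sum_le_usedWeight {n : ℕ} {cplx : Finset (Set (Fin n → ℝ))} {μ : Set (Fin n → ℝ) → ℤ}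
    (hw : IsWeighting cplx μ) {L : Set (Fin n → ℝ)} {T : Finset (Set (Fin n → ℝ))}
    (hT : T ⊆ cplx) (hcut : ∀ P ∈ T, μ P + 1 ≤ ((P ∩ L).ncard : ℤ)) :
    ∑ P ∈ T, μ P ≤ usedWeight cplx μ L := by
  calc ∑ P ∈ T, μ P = ∑ P ∈ T, if μ P + 1 ≤ ((P ∩ L).ncard : ℤ) then μ P else 0 :=
        Finset.sum_congr rfl fun P hP => (if_pos (hcut P hP)).symm
    _ ≤ usedWeight cplx μ L :=
        Finset.sum_le_sum_of_subset_of_nonneg hT fun P hP _ => by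
          split_ifs
          exacts [(hw P hP).1, le_rfl]

theorem used_ge_of_components_general {n : ℕ} (Δ : Set (Fin n → ℝ)) (cplx : Finset (Set (Fin n → ℝ)))
    (μ : Set (Fin n → ℝ) → ℤ)
    (hdec : IsLatticeDecomp Δ cplx)
    (hw : IsWeighting cplx μ)
    (s : ℕ) (C : Fin s → Set (Fin n → ℝ))
    (hC : ∀ k, ∃ x ∈ weightSupp cplx μ, C k = connectedComponentIn (weightSupp cplx μ) x)
    (hCinj : Function.Injective C)
    (P' : Set (Fin n → ℝ)) (hP' : P' ∈ cplx)
    (hdef₂ : μ P' < ((latticePts P').ncard : ℤ) - 1)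
    (hcut : μ P' + 1 ≤ (((P' ∩ latticePts (⋃ k, C k)).ncard : ℤ))) :
    ((latticePts (⋃ k, C k)).ncard : ℤ) - s + μ P' ≤
      usedWeight cplx μ (latticePts (⋃ k, C k)) := by
  classical
  set full := cplx.filter fun P => μ P = ((latticePts P).ncard : ℤ) - 1
  have hsupp : weightSupp cplx μ = ⋃₀ (full : Set (Set (Fin n → ℝ))) := by
    rw [Finset.coe_filter]; rfl
  have hcover : IsLatticeCover {x | IsLatticePoint x} full :=
    hdec.isLatticeCover.mono (Finset.filter_subset _ cplx)
  have hcount := hcover.ncard_iUnion_inter_add_card_le (hsupp ▸ hC) hCinj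
  simp only [← latticePts_eq_inter] at hcount
  set T := full.filter fun P => ∃ k, P ⊆ C k
  have hTfull : ∀ P ∈ T, μ P = ((latticePts P).ncard : ℤ) - 1 := fun P hP =>
    (Finset.mem_filter.1 (Finset.mem_filter.1 hP).1).2
  have hTcut : ∀ P ∈ T, μ P + 1 ≤ ((P ∩ latticePts (⋃ k, C k)).ncard : ℤ) := by
    intro P hP
    obtain ⟨k, hPk⟩ := (Finset.mem_filter.1 hP).2
    rw [hTfull P hP, inter_latticePts_of_subset (hPk.trans (subset_iUnion C k)), sub_add_cancel]
  have hP'T : P' ∉ T := fun h => hdef₂.ne (hTfull P' h)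
  have hused := sum_le_usedWeight hw
    (Finset.insert_subset hP' ((Finset.filter_subset _ _).trans (Finset.filter_subset _ _)))
    (Finset.forall_mem_insert _ _ _ |>.2 ⟨hcut, hTcut⟩)
  rw [Finset.sum_insert hP'T, Finset.sum_congr rfl hTfull, Finset.sum_sub_distrib,
    Finset.sum_const, nsmul_one] at hused
  zify at hcount
  omega

/-- If `L` is the set of lattice points of a union of `s` distinct connected components of
`supp(μ)` and some deficient `P' ∈ cplx` satisfies `|P' ∩ L| ≥ μ(P') + 1`, then
`used(L) ≥ |L| - s + μ(P')`. -/
theorem used_ge_of_components {n : ℕ} (Δ : Set (Fin n → ℝ)) (cplx : Finset (Set (Fin n → ℝ)))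
    (μ : Set (Fin n → ℝ) → ℤ)
    (hΔ : IsLatticePolytope Δ) (hdec : IsLatticeDecomp Δ cplx)
    (hsimp : LatticeSimplicial cplx) (hw : IsWeighting cplx μ)
    (s : ℕ) (C : Fin s → Set (Fin n → ℝ))
    (hC : ∀ k, ∃ x ∈ weightSupp cplx μ, C k = connectedComponentIn (weightSupp cplx μ) x)
    (hCinj : Function.Injective C)
    (P' : Set (Fin n → ℝ)) (hP' : P' ∈ cplx)
    (hdef₁ : 0 < μ P') (hdef₂ : μ P' < ((latticePts P').ncard : ℤ) - 1)
    (hcut : μ P' + 1 ≤ (((P' ∩ latticePts (⋃ k, C k)).ncard : ℤ))) :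
    ((latticePts (⋃ k, C k)).ncard : ℤ) - s + μ P' ≤
      usedWeight cplx μ (latticePts (⋃ k, C k)) :=
  used_ge_of_components_general Δ cplx μ hdec hw s C hC hCinj P' hP' hdef₂ hcut
end

section
/- A finite hypergraph G has a simple cycle if and only if e(G) + (number of connected components of G) ≥ v(G) + 1. -/
/-- Two vertices are related if they lie in a common edge. -/
def HStep {V E : Type*} (H : E → Finset V) : V → V → Prop :=
  fun p q => ∃ e, p ∈ H e ∧ q ∈ H e

/-- `G` has a simple cycle: there are `ℓ ≥ 2` pairwise distinct edges `e 0, …, e (ℓ-1)` and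
pairwise distinct vertices `v 0, …, v (ℓ-1)` with `v ℓ = v 0`, such that edge `e k`
contains both `v k` and `v (k+1)`. -/
def HasSimpleCycle {V E : Type*} (H : E → Finset V) : Prop :=
  ∃ ℓ : ℕ, 2 ≤ ℓ ∧ ∃ (v : Fin (ℓ + 1) → V) (e : Fin ℓ → E),
    v (Fin.last ℓ) = v 0 ∧
    (∀ k k' : Fin ℓ, v k.castSucc = v k'.castSucc → k = k') ∧
    Function.Injective e ∧
    ∀ k : Fin ℓ, v k.castSucc ∈ H (e k) ∧ v k.succ ∈ H (e k)

/-! Deleting an edge `e` lowers `e(G) + c(G)` by `|e| - t`, where `t` is the number of components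
of `G - e` that meet `e`; as `t ≤ |e|`, induction over the edges gives `v(G) ≤ e(G) + c(G)`.
The drop is positive exactly when two vertices of `e` are already connected in `G - e`. A
shortest such connection has no chords, so it uses pairwise distinct vertices and edges and closes
up with `e` into a simple cycle; conversely, every edge of a simple cycle is of this kind. Hence
without simple cycles every drop is zero and `e(G) + c(G) = v(G)`, while deleting an edge of a
simple cycle shows `e(G) + c(G) > v(G)`. -/

open Function Set Relation

theorem card_add_ncard_eq_of_collapse {α β : Type*} [Finite α] {π : α → β} (hπ : Surjective π)
    {T : Set α} (hT : T.Nonempty) (hfib : ∀ x y, π x = π y ↔ x = y ∨ x ∈ T ∧ y ∈ T) :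
    Nat.card β + T.ncard = Nat.card α + 1 := by
  obtain ⟨t, ht⟩ := hT
  have hinj : InjOn π (insert t Tᶜ) := by
    intro x hx y hy hxy
    rcases (hfib x y).1 hxy with h | ⟨hxT, hyT⟩
    · exact h
    · simp only [mem_insert_iff, mem_compl_iff] at hx hy
      rcases hx with rfl | hx <;> rcases hy with rfl | hy <;> tauto
  have himage : π '' insert t Tᶜ = univ := by
    refine eq_univ_of_forall fun z => ?_
    obtain ⟨x, rfl⟩ := hπ z
    by_cases hx : x ∈ T
    · exact ⟨t, mem_insert _ _, (hfib t x).2 (Or.inr ⟨ht, hx⟩)⟩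
    · exact ⟨x, mem_insert_of_mem _ hx, rfl⟩
  have hcard := hinj.ncard_image
  rw [himage, ncard_univ, ncard_insert_of_notMem (not_not_intro ht)] at hcard
  have := ncard_add_ncard_compl T
  omega

theorem HasSimpleCycle.mono {V E : Type*} {H H' : E → Finset V} (hH : ∀ e, H e ⊆ H' e)
    (h : HasSimpleCycle H) : HasSimpleCycle H' := by
  obtain ⟨ℓ, hℓ, v, e, hlast, hv, he, hstep⟩ := h
  exact ⟨ℓ, hℓ, v, e, hlast, hv, he, fun k => ⟨hH _ (hstep k).1, hH _ (hstep k).2⟩⟩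

theorem injOn_of_lt_imp_ne {α β : Type*} [LinearOrder α] {f : α → β} {s : Set α}
    (h : ∀ i ∈ s, ∀ j ∈ s, i < j → f i ≠ f j) : InjOn f s :=
  injOn_iff_injective.2 <| Injective.of_lt_imp_ne fun i j hij => h i i.2 j j.2 hij

namespace Hypergraph

variable {V E : Type*} {H : E → Finset V}

theorem hStep_symm {a b : V} : HStep H a b → HStep H b a :=
  fun ⟨e, ha, hb⟩ => ⟨e, hb, ha⟩

section Walks

variable (H) in
def IsWalk (x : ℕ → V) (n : ℕ) : Prop :=
  ∀ k < n, HStep H (x k) (x (k + 1))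

variable (H) in
def HasWalk (a b : V) (n : ℕ) : Prop :=
  ∃ x : ℕ → V, x 0 = a ∧ x n = b ∧ IsWalk H x n

theorem hasWalk_zero (a : V) : HasWalk H a a 0 :=
  ⟨fun _ => a, rfl, rfl, fun _ hk => absurd hk (Nat.not_lt_zero _)⟩

theorem hasWalk_one_of_hStep {a b : V} (h : HStep H a b) : HasWalk H a b 1 :=
  ⟨fun k => if k = 0 then a else b, rfl, rfl, fun k hk => by
    obtain rfl : k = 0 := by omega
    simpa using h⟩

theorem IsWalk.hasWalk {x : ℕ → V} {n p q : ℕ} (hw : IsWalk H x n) (hpq : p ≤ q) (hqn : q ≤ n) :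
    HasWalk H (x p) (x q) (q - p) :=
  ⟨fun k => x (p + k), rfl, by simp only [Nat.add_sub_cancel' hpq],
    fun k hk => hw (p + k) (by omega)⟩

theorem HasWalk.append {a b c : V} {m n : ℕ} (h₁ : HasWalk H a b m) (h₂ : HasWalk H b c n) :
    HasWalk H a c (m + n) := by
  obtain ⟨x, rfl, rfl, hx⟩ := h₁
  obtain ⟨y, hy0, rfl, hy⟩ := h₂
  let z : ℕ → V := fun k => if k ≤ m then x k else y (k - m)
  have hz : ∀ k, m ≤ k → z k = y (k - m) := by
    intro k hk
    rcases hk.eq_or_lt with rfl | hk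
    · simp [z, hy0]
    · simp [z, hk.not_ge]
  refine ⟨z, if_pos (Nat.zero_le m), by rw [hz _ (by omega), Nat.add_sub_cancel_left],
    fun k hk => ?_⟩
  rcases lt_or_ge k m with hkm | hkm
  · simpa [z, hkm.le, Nat.succ_le_of_lt hkm] using hx k hkm
  · rw [hz k hkm, hz (k + 1) (by omega), show k + 1 - m = k - m + 1 by omega]
    exact hy (k - m) (by omega)

theorem HasWalk.symm {a b : V} {n : ℕ} (h : HasWalk H a b n) : HasWalk H b a n := by
  obtain ⟨x, rfl, rfl, hx⟩ := h
  refine ⟨fun k => x (n - k), by simp, by simp, fun k hk => ?_⟩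
  have := hStep_symm (hx (n - (k + 1)) (by omega))
  rwa [show n - (k + 1) + 1 = n - k by omega] at this

theorem IsWalk.eqvGen {x : ℕ → V} {n : ℕ} (hw : IsWalk H x n) : EqvGen (HStep H) (x 0) (x n) := by
  induction n with
  | zero => exact EqvGen.refl _
  | succ n ih =>
    exact (ih fun k hk => hw k (by omega)).trans _ _ _ (EqvGen.rel _ _ (hw n n.lt_succ_self))

theorem eqvGen_hStep_iff {a b : V} : EqvGen (HStep H) a b ↔ ∃ n, HasWalk H a b n := by
  refine ⟨fun h => ?_, fun ⟨n, x, hx0, hxn, hx⟩ => hx0 ▸ hxn ▸ hx.eqvGen⟩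
  have hequiv : Equivalence fun a b => ∃ n, HasWalk H a b n :=
    ⟨fun a => ⟨0, hasWalk_zero a⟩, fun ⟨n, h⟩ => ⟨n, h.symm⟩,
      fun ⟨m, h₁⟩ ⟨n, h₂⟩ => ⟨m + n, h₁.append h₂⟩⟩
  exact hequiv.eqvGen_iff.1 (EqvGen.mono (fun a b hab => ⟨1, hasWalk_one_of_hStep hab⟩) a b h)

theorem IsWalk.splice {x : ℕ → V} {n i j d : ℕ} (hw : IsWalk H x n) (hij : i ≤ j) (hjn : j ≤ n)
    (h : HasWalk H (x i) (x j) d) : HasWalk H (x 0) (x n) (i + d + (n - j)) := by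
  simpa using ((hw.hasWalk (Nat.zero_le i) (hij.trans hjn)).append h).append (hw.hasWalk hjn le_rfl)

theorem HasWalk.exists_inducedPath {a b : V} {n : ℕ} (h : HasWalk H a b n) :
    ∃ m x, x 0 = a ∧ x m = b ∧ IsWalk H x m ∧ InjOn x (Iic m) ∧
      ∀ i j, i + 1 < j → j ≤ m → ¬ HStep H (x i) (x j) := by
  classical
  have hex : ∃ n, HasWalk H a b n := ⟨n, h⟩
  obtain ⟨x, hx0, hxm, hx⟩ := Nat.find_spec hex
  have hshort : ∀ i j d, i < j → j ≤ Nat.find hex → HasWalk H (x i) (x j) d → j ≤ i + d := by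
    intro i j d hij hjm hd
    by_contra! hlt
    have := hx.splice hij.le hjm hd
    rw [hx0, hxm] at this
    exact Nat.find_min hex (by omega) this
  refine ⟨Nat.find hex, x, hx0, hxm, hx, injOn_of_lt_imp_ne fun i _ j hj hij hxij => ?_,
    fun i j hij hjm hstep => ?_⟩
  · have := hshort i j 0 hij hj (hxij ▸ hasWalk_zero _)
    omega
  · have := hshort i j 1 (by omega) hjm (hasWalk_one_of_hStep hstep)
    omega

end Walks

section Cycles

variable (H) in
def IsCycle (x : ℕ → V) (f : ℕ → E) (ℓ : ℕ) : Prop :=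
  2 ≤ ℓ ∧ x ℓ = x 0 ∧ InjOn x (Iio ℓ) ∧ InjOn f (Iio ℓ) ∧
    ∀ k < ℓ, x k ∈ H (f k) ∧ x (k + 1) ∈ H (f k)

theorem hasSimpleCycle_iff_exists_isCycle : HasSimpleCycle H ↔ ∃ ℓ x f, IsCycle H x f ℓ := by
  constructor
  · rintro ⟨ℓ, hℓ, v, e, hlast, hv, he, hstep⟩
    have hv' : ∀ n (hn : n < ℓ + 1), v ⟨n % (ℓ + 1), Nat.mod_lt _ (by omega)⟩ = v ⟨n, hn⟩ :=
      fun n hn => congrArg v (Fin.ext (Nat.mod_eq_of_lt hn))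
    have he' : ∀ n (hn : n < ℓ), e ⟨n % ℓ, Nat.mod_lt _ (by omega)⟩ = e ⟨n, hn⟩ :=
      fun n hn => congrArg e (Fin.ext (Nat.mod_eq_of_lt hn))
    refine ⟨ℓ, fun n => v ⟨n % (ℓ + 1), Nat.mod_lt _ (by omega)⟩,
      fun n => e ⟨n % ℓ, Nat.mod_lt _ (by omega)⟩, hℓ, ?_, ?_, ?_, fun k hk => ?_⟩
    · simp only [hv' ℓ (by omega), hv' 0 (by omega)]
      exact hlast
    · intro i hi j hj hij
      simp only [hv' i (by simp at hi; omega), hv' j (by simp at hj; omega)] at hij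
      exact Fin.mk.inj (hv ⟨i, hi⟩ ⟨j, hj⟩ hij)
    · intro i hi j hj hij
      simp only [he' i hi, he' j hj] at hij
      exact Fin.mk.inj (he hij)
    · simp only [hv' k (by omega), hv' (k + 1) (by omega), he' k hk]
      exact hstep ⟨k, hk⟩
  · rintro ⟨ℓ, x, f, hℓ, hlast, hx, hf, hstep⟩
    exact ⟨ℓ, hℓ, fun k => x k, fun k => f k, hlast, fun k k' h => Fin.ext (hx k.2 k'.2 h),
      fun k k' h => Fin.ext (hf k.2 k'.2 h), fun k => hstep k k.2⟩

end Cycles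

section DeleteEdge

variable [DecidableEq E]

-- An edge is deleted by emptying it; an empty edge contributes `0 - 1 = 0` to `edgeTotal`.
variable (H) in
def deleteEdge (e0 : E) : E → Finset V :=
  update H e0 ∅

@[simp] theorem deleteEdge_self (e0 : E) : deleteEdge H e0 e0 = ∅ :=
  update_self ..

theorem deleteEdge_of_ne {e e0 : E} (h : e ≠ e0) : deleteEdge H e0 e = H e :=
  update_of_ne h ..

theorem deleteEdge_subset (e0 e : E) : deleteEdge H e0 e ⊆ H e := by
  rcases eq_or_ne e e0 with rfl | h
  · simp
  · rw [deleteEdge_of_ne h]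

theorem ne_of_mem_deleteEdge {a : V} {e e0 : E} (h : a ∈ deleteEdge H e0 e) : e ≠ e0 := by
  rintro rfl
  simp at h

theorem IsCycle.not_injOn {x : ℕ → V} {f : ℕ → E} {ℓ : ℕ} (hc : IsCycle H x f ℓ) :
    ¬ InjOn (Quot.mk (HStep (deleteEdge H (f 0)))) (H (f 0)) := by
  obtain ⟨hℓ, hlast, hx, hf, hstep⟩ := hc
  have hw : IsWalk (deleteEdge H (f 0)) (fun k => x (k + 1)) (ℓ - 1) := fun k hk => by
    have hne : f (k + 1) ≠ f 0 := fun h => by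
      have := hf (show k + 1 < ℓ by omega) (show 0 < ℓ by omega) h
      omega
    exact ⟨f (k + 1), by simpa only [deleteEdge_of_ne hne] using hstep (k + 1) (by omega)⟩
  have h01 : x 0 ≠ x 1 := fun h => by
    have := hx (show 0 < ℓ by omega) (show 1 < ℓ by omega) h
    omega
  intro hinj
  refine h01 (hinj (hstep 0 (by omega)).1 (hstep 0 (by omega)).2 (Quot.eq.2 ?_))
  have := hw.eqvGen
  rw [Nat.sub_add_cancel (by omega), hlast] at this
  exact this.symm

theorem hasSimpleCycle_of_eqvGen_deleteEdge {e0 : E} {a b : V} (ha : a ∈ H e0) (hb : b ∈ H e0)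
    (hab : a ≠ b) (hconn : EqvGen (HStep (deleteEdge H e0)) a b) : HasSimpleCycle H := by
  obtain ⟨n, hn⟩ := eqvGen_hStep_iff.1 hconn
  obtain ⟨m, x, hx0, hxm, hw, hinj, hchord⟩ := hn.exists_inducedPath
  have hedge : ∀ k, ∃ e, k < m → x k ∈ deleteEdge H e0 e ∧ x (k + 1) ∈ deleteEdge H e0 e :=
    fun k => if hk : k < m then (hw k hk).imp fun _ he _ => he else ⟨e0, fun h => absurd h hk⟩
  choose f hf using hedge
  have hm : 1 ≤ m := Nat.one_le_iff_ne_zero.2 fun h => hab (by rw [← hx0, ← hxm, h])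
  refine hasSimpleCycle_iff_exists_isCycle.2 ⟨m + 1, fun k => if k ≤ m then x k else a,
    update f m e0, by omega, by simp [hx0], fun i hi j hj hij => ?_, ?_, fun k hk => ?_⟩
  · simp only [mem_Iio] at hi hj
    simp only [Nat.le_of_lt_succ hi, Nat.le_of_lt_succ hj, if_true] at hij
    exact hinj (Nat.le_of_lt_succ hi) (Nat.le_of_lt_succ hj) hij
  · refine injOn_of_lt_imp_ne fun i _ j hj hij hfij => ?_
    simp only [mem_Iio] at hj
    have hi : i < m := by omega
    rw [update_of_ne hi.ne] at hfij
    rcases (Nat.lt_succ_iff.1 hj).lt_or_eq with hj | rfl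
    · -- two steps through one edge would give the chord `x i — x (j + 1)`
      rw [update_of_ne hj.ne] at hfij
      exact hchord i (j + 1) (by omega) (by omega) ⟨f i, (hf i hi).1, hfij ▸ (hf j hj).2⟩
    · rw [update_self] at hfij
      exact ne_of_mem_deleteEdge (hf i hi).1 hfij
  · rcases (Nat.lt_succ_iff.1 hk).lt_or_eq with hk | rfl
    · simpa [hk.le, Nat.succ_le_of_lt hk, update_of_ne hk.ne] using
        And.intro (deleteEdge_subset _ _ (hf k hk).1) (deleteEdge_subset _ _ (hf k hk).2)
    · simpa [hxm] using And.intro hb ha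

theorem hasSimpleCycle_iff_exists_not_injOn :
    HasSimpleCycle H ↔ ∃ e0, ¬ InjOn (Quot.mk (HStep (deleteEdge H e0))) (H e0) := by
  refine ⟨fun h => ?_, fun ⟨e0, hnot⟩ => ?_⟩
  · obtain ⟨ℓ, x, f, hc⟩ := hasSimpleCycle_iff_exists_isCycle.1 h
    exact ⟨f 0, hc.not_injOn⟩
  · obtain ⟨a, ha, b, hb, hab, hne⟩ :
        ∃ a ∈ H e0, ∃ b ∈ H e0, Quot.mk _ a = Quot.mk _ b ∧ a ≠ b := by
      simpa [InjOn] using hnot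
    exact hasSimpleCycle_of_eqvGen_deleteEdge ha hb hne (Quot.eq.1 hab)

end DeleteEdge

section Counting

variable (H) in
def edgeTotal [Fintype E] : ℕ :=
  ∑ e, ((H e).card - 1)

variable (H) in
noncomputable def numComponents : ℕ :=
  Nat.card (Quot (HStep H))

theorem edgeTotal_empty [Fintype E] : edgeTotal (fun _ : E => (∅ : Finset V)) = 0 := by
  simp [edgeTotal]

theorem numComponents_empty : numComponents (fun _ : E => (∅ : Finset V)) = Nat.card V :=
  Nat.card_congr
    { toFun := Quot.lift id fun _ _ ⟨_, ha, _⟩ => absurd ha (Finset.notMem_empty _)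
      invFun := Quot.mk _
      left_inv := fun q => Quot.inductionOn q fun _ => rfl
      right_inv := fun _ => rfl }

variable [DecidableEq E]

theorem sum_deleteEdge_add [Fintype E] {M : Type*} [AddCommMonoid M] (g : Finset V → M)
    (hg : g ∅ = 0) (e0 : E) : ∑ e, g (deleteEdge H e0 e) + g (H e0) = ∑ e, g (H e) := by
  rw [← Finset.add_sum_erase _ _ (Finset.mem_univ e0),
    ← Finset.add_sum_erase _ _ (Finset.mem_univ e0), deleteEdge_self, hg, zero_add, add_comm]
  congr 1
  exact Finset.sum_congr rfl fun e he => by rw [deleteEdge_of_ne (Finset.ne_of_mem_erase he)]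

theorem numComponents_add_ncard_image [Finite V] {e0 : E} (hne : (H e0).Nonempty) :
    numComponents H + (Quot.mk (HStep (deleteEdge H e0)) '' H e0).ncard =
      numComponents (deleteEdge H e0) + 1 := by
  set r := HStep (deleteEdge H e0)
  set T := Quot.mk r '' H e0
  have hsub : ∀ a b, r a b → HStep H a b := fun _ _ ⟨e, ha, hb⟩ =>
    ⟨e, deleteEdge_subset _ _ ha, deleteEdge_subset _ _ hb⟩
  have hS : Equivalence fun u w : V =>
      Quot.mk r u = Quot.mk r w ∨ Quot.mk r u ∈ T ∧ Quot.mk r w ∈ T :=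
    ⟨fun _ => Or.inl rfl, fun h => h.imp Eq.symm And.symm, fun h₁ h₂ => by
      rcases h₁ with h₁ | h₁ <;> rcases h₂ with h₂ | h₂ <;> simp_all⟩
  refine card_add_ncard_eq_of_collapse (π := Quot.map id hsub)
    (Quot.ind fun a => ⟨Quot.mk r a, rfl⟩) ((Finset.coe_nonempty.2 hne).image _) ?_
  rintro ⟨u⟩ ⟨w⟩
  constructor
  · intro h
    refine hS.eqvGen_iff.1 (EqvGen.mono (fun a b hab => ?_) u w (Quot.eq.1 h))
    obtain ⟨e, ha, hb⟩ := hab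
    rcases eq_or_ne e e0 with rfl | he
    · exact Or.inr ⟨mem_image_of_mem _ ha, mem_image_of_mem _ hb⟩
    · exact Or.inl (Quot.sound ⟨e, by rwa [deleteEdge_of_ne he], by rwa [deleteEdge_of_ne he]⟩)
  · rintro (h | ⟨⟨a, ha, hau⟩, ⟨b, hb, hbw⟩⟩)
    · rw [h]
    · rw [← hau, ← hbw]
      exact Quot.sound ⟨e0, ha, hb⟩

theorem edgeTotal_add_numComponents_deleteEdge [Finite V] [Fintype E] {e0 : E}
    (hne : (H e0).Nonempty) :
    edgeTotal H + numComponents H + (Quot.mk (HStep (deleteEdge H e0)) '' H e0).ncard =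
      edgeTotal (deleteEdge H e0) + numComponents (deleteEdge H e0) + (H e0).card := by
  have hsum := sum_deleteEdge_add (H := H) (fun s => s.card - 1) rfl e0
  have hcomp := numComponents_add_ncard_image hne
  have := hne.card_pos
  simp only [edgeTotal] at hsum ⊢
  omega

theorem deleteEdge_induction [Fintype E] {P : (E → Finset V) → Prop} (empty : P fun _ => ∅)
    (step : ∀ H e0, (H e0).Nonempty → P (deleteEdge H e0) → P H) (H : E → Finset V) : P H := by
  induction hN : ∑ e, (H e).card using Nat.strong_induction_on generalizing H with
  | _ N ih =>
    by_cases hall : ∀ e, H e = ∅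
    · obtain rfl : H = fun _ => ∅ := funext hall
      exact empty
    · obtain ⟨e0, he0⟩ := not_forall.1 hall
      have hne := Finset.nonempty_iff_ne_empty.2 he0
      have hsum := sum_deleteEdge_add (H := H) Finset.card Finset.card_empty e0
      exact step H e0 hne (ih _ (by have := hne.card_pos; omega) _ rfl)

end Counting

section Bounds

variable [Fintype V] [Fintype E]

theorem card_le_edgeTotal_add_numComponents (H : E → Finset V) :
    Fintype.card V ≤ edgeTotal H + numComponents H := by
  classical
  induction H using deleteEdge_induction with
  | empty => simp [edgeTotal_empty, numComponents_empty]
  | step H e0 hne ih =>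
    have := edgeTotal_add_numComponents_deleteEdge hne
    have : (Quot.mk (HStep (deleteEdge H e0)) '' H e0).ncard ≤ (H e0).card :=
      le_of_le_of_eq ncard_image_le (ncard_coe_finset _)
    omega

theorem edgeTotal_add_numComponents_le_of_not_hasSimpleCycle (H : E → Finset V)
    (hH : ¬ HasSimpleCycle H) : edgeTotal H + numComponents H ≤ Fintype.card V := by
  classical
  induction H using deleteEdge_induction with
  | empty => simp [edgeTotal_empty, numComponents_empty]
  | step H e0 hne ih =>
    have hinj : InjOn (Quot.mk (HStep (deleteEdge H e0))) (H e0) := by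
      by_contra h
      exact hH (hasSimpleCycle_iff_exists_not_injOn.2 ⟨e0, h⟩)
    have := edgeTotal_add_numComponents_deleteEdge hne
    have := ih fun h => hH (h.mono (deleteEdge_subset e0))
    rw [hinj.ncard_image, ncard_coe_finset] at *
    omega

theorem card_lt_edgeTotal_add_numComponents {H : E → Finset V} (hH : HasSimpleCycle H) :
    Fintype.card V < edgeTotal H + numComponents H := by
  classical
  obtain ⟨e0, hnot⟩ := hasSimpleCycle_iff_exists_not_injOn.1 hH
  have hlt : (Quot.mk (HStep (deleteEdge H e0)) '' H e0).ncard < (H e0).card := by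
    rw [← ncard_coe_finset]
    exact lt_of_le_of_ne ncard_image_le fun h => hnot (injOn_of_ncard_image_eq h)
  have hne : (H e0).Nonempty := Finset.card_pos.1 (by omega)
  have := edgeTotal_add_numComponents_deleteEdge hne
  have := card_le_edgeTotal_add_numComponents (deleteEdge H e0)
  omega

end Bounds

end Hypergraph

theorem hasSimpleCycle_iff_general {V E : Type*} [Fintype V] [Fintype E]
    (H : E → Finset V) :
    HasSimpleCycle H ↔
      Fintype.card V + 1 ≤ (∑ e : E, ((H e).card - 1)) + Nat.card (Quot (HStep H)) :=
  ⟨Hypergraph.card_lt_edgeTotal_add_numComponents, fun hle => by_contra fun hH =>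
    (Hypergraph.edgeTotal_add_numComponents_le_of_not_hasSimpleCycle H hH).not_gt hle⟩

/-- A finite hypergraph has a simple cycle iff
`e(G) + (number of connected components) ≥ v(G) + 1`. -/
theorem hasSimpleCycle_iff {V E : Type*} [Fintype V] [Fintype E]
    (H : E → Finset V) (hcard : ∀ e, 2 ≤ (H e).card) :
    HasSimpleCycle H ↔
      Fintype.card V + 1 ≤ (∑ e : E, ((H e).card - 1)) + Nat.card (Quot (HStep H)) :=
  hasSimpleCycle_iff_general H
end

section
/- If G is a connected finite hypergraph with e(G) = v(G), then G has at least two distinct good orientations. -/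
/-- A hypergraph (with edges given by vertex finsets) is connected: any two vertices
are joined by a path. -/
def HConnected {V E : Type*} (H : E → Finset V) : Prop :=
  ∀ u v : V, Relation.ReflTransGen (fun p q => ∃ e, p ∈ H e ∧ q ∈ H e) u v

/-- A good orientation of a hypergraph: a surjection `o` from vertices to edges with
`o v` an edge containing `v`, and with exactly `|e| - 1` vertices mapped to each edge. -/
def GoodOrientation {V E : Type*} [Fintype V] [DecidableEq E]
    (H : E → Finset V) (o : V → E) : Prop :=
  Function.Surjective o ∧ (∀ v, v ∈ H (o v)) ∧
    ∀ e, (Finset.univ.filter fun v => o v = e).card = (H e).card - 1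

/-!
A good orientation is a perfect matching between the vertices and the slots of the edges, an
edge `e` having `|e| - 1` slots. Since `e(G) = v(G)` both sides have the same size, so by Hall's
theorem it suffices that every vertex set `s` meets edges carrying at least `|s|` slots. For
`s = V` this is `e(G) = v(G)`. Otherwise pick `r ∉ s` and let each `v ∈ s` use the first edge of a
shortest path to `r`: the vertex of an edge closest to `r` never uses it, so each edge is used by
at most `|e| - 1` vertices of `s`.

Given a good orientation `o`, each edge `e` contains a vertex `m e` with `o (m e) ≠ e`. The map
`v ↦ m (o v)` has a cycle, and shifting `o` backwards along it gives a second good orientation.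
-/

open Finset

namespace Function

theorem periodicPts_nonempty {α : Type*} [Finite α] [Nonempty α] (f : α → α) :
    (periodicPts f).Nonempty := by
  obtain ⟨x⟩ := ‹Nonempty α›
  obtain ⟨m, n, hmn, h⟩ := Set.finite_univ.exists_lt_map_eq_of_forall_mem
    (f := fun k => f^[k] x) fun _ => Set.mem_univ _
  refine ⟨f^[m] x, n - m, Nat.sub_pos_of_lt hmn, ?_⟩
  change f^[n - m] (f^[m] x) = f^[m] x
  rw [← iterate_add_apply, Nat.sub_add_cancel hmn.le]
  exact h.symm

theorem exists_perm_eq_or_eq_self {α : Type*} [Finite α] [Nonempty α] (f : α → α) :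
    ∃ σ : Equiv.Perm α, (∀ a, σ a = f a ∨ σ a = a) ∧ ∃ a, σ a = f a := by
  classical
  let σ := Equiv.Perm.ofSubtype ((bijOn_periodicPts f).equiv f)
  have hσ : ∀ a ∈ periodicPts f, σ a = f a := fun a ha =>
    Equiv.Perm.ofSubtype_apply_of_mem _ ha
  obtain ⟨a, ha⟩ := periodicPts_nonempty f
  refine ⟨σ, fun b => ?_, a, hσ a ha⟩
  by_cases hb : b ∈ periodicPts f
  · exact .inl (hσ b hb)
  · exact .inr (Equiv.Perm.ofSubtype_apply_of_not_mem _ hb)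

end Function

theorem Finset.card_filter_exists_lt_le {α β : Type*} [LinearOrder β] (t : Finset α)
    (d : α → β) : (t.filter fun v => ∃ w ∈ t, d w < d v).card ≤ t.card - 1 := by
  classical
  rcases t.eq_empty_or_nonempty with rfl | ht
  · simp
  obtain ⟨m, hm, hmin⟩ := t.exists_min_image d ht
  calc _ ≤ (t.erase m).card := card_le_card fun v hv => by
        obtain ⟨hvt, w, hw, hlt⟩ := mem_filter.mp hv
        exact mem_erase.mpr ⟨fun hvm => (hmin w hw).not_gt (hvm ▸ hlt), hvt⟩
    _ = t.card - 1 := card_erase_of_mem hm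

theorem Finset.card_filter_sigma_fst {ι : Type*} [Fintype ι] (n : ι → ℕ) (P : ι → Prop)
    [DecidablePred P] :
    (univ.filter fun p : Σ i, Fin (n i) => P p.1).card = ∑ i with P i, n i := by
  have : (univ.filter fun p : Σ i, Fin (n i) => P p.1) = (univ.filter P).sigma fun _ => univ := by
    ext
    simp
  simp [this]

section Hypergraph

variable {V E : Type*} {H : E → Finset V}

def twoSection (H : E → Finset V) : SimpleGraph V where
  Adj u v := u ≠ v ∧ ∃ e, u ∈ H e ∧ v ∈ H e
  symm := ⟨fun _ _ ⟨hne, e, hu, hv⟩ => ⟨hne.symm, e, hv, hu⟩⟩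
  loopless := ⟨fun _ h => h.1 rfl⟩

theorem twoSection_adj {u v : V} :
    (twoSection H).Adj u v ↔ u ≠ v ∧ ∃ e, u ∈ H e ∧ v ∈ H e :=
  Iff.rfl

theorem HConnected.reachable_twoSection (hconn : HConnected H) (u v : V) :
    (twoSection H).Reachable u v := by
  induction hconn u v with
  | refl => rfl
  | @tail b c _ hstep ih =>
    by_cases hbc : b = c
    · exact hbc ▸ ih
    · exact ih.trans (SimpleGraph.Adj.reachable (twoSection_adj.mpr ⟨hbc, hstep⟩))

theorem HConnected.exists_edge_dist_lt (hconn : HConnected H) {r v : V} (hv : v ≠ r) :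
    ∃ e, v ∈ H e ∧ ∃ w ∈ H e, (twoSection H).dist w r < (twoSection H).dist v r := by
  obtain ⟨p, hp⟩ := (HConnected.reachable_twoSection hconn v r).exists_walk_length_eq_dist
  cases p with
  | nil => exact absurd rfl hv
  | cons hadj q =>
    obtain ⟨-, e, hve, hwe⟩ := twoSection_adj.mp hadj
    refine ⟨e, hve, _, hwe, ?_⟩
    rw [← hp, SimpleGraph.Walk.length_cons]
    exact Nat.lt_succ_of_le (SimpleGraph.dist_le q)

/-- A vertex with a lower neighbour inside an edge is not the minimum of that edge. -/
theorem card_le_sum_of_descent [DecidableEq V] [Fintype E] {β : Type*} [LinearOrder β]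
    (d : V → β) (s : Finset V) (hdesc : ∀ v ∈ s, ∃ e, v ∈ H e ∧ ∃ w ∈ H e, d w < d v) :
    s.card ≤ ∑ e with ∃ v ∈ s, v ∈ H e, ((H e).card - 1) := by
  calc s.card
      ≤ ((univ.filter fun e => ∃ v ∈ s, v ∈ H e).biUnion
          fun e => (H e).filter fun v => ∃ w ∈ H e, d w < d v).card := by
        refine card_le_card fun v hv => ?_
        obtain ⟨e, hve, hlt⟩ := hdesc v hv
        exact mem_biUnion.mpr
          ⟨e, mem_filter.mpr ⟨mem_univ e, v, hv, hve⟩, mem_filter.mpr ⟨hve, hlt⟩⟩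
    _ ≤ ∑ e with ∃ v ∈ s, v ∈ H e, ((H e).filter fun v => ∃ w ∈ H e, d w < d v).card :=
        card_biUnion_le
    _ ≤ _ := sum_le_sum fun e _ => card_filter_exists_lt_le _ _

/-- Hall's condition for matching vertices to edge slots. -/
theorem HConnected.card_le_sum_edges_meeting [DecidableEq V] [Fintype V] [Fintype E]
    (hconn : HConnected H) (heq : ∑ e, ((H e).card - 1) = Fintype.card V) (s : Finset V) :
    s.card ≤ ∑ e with ∃ v ∈ s, v ∈ H e, ((H e).card - 1) := by
  by_cases hs : s = univ
  · subst hs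
    rw [sum_filter_of_ne, heq, card_univ]
    intro e _ he
    obtain ⟨v, hv⟩ := card_pos.mp (Nat.pos_of_ne_zero (by omega : (H e).card ≠ 0))
    exact ⟨v, mem_univ v, hv⟩
  · obtain ⟨r, hr⟩ := not_forall.mp (mt eq_univ_iff_forall.mpr hs)
    exact card_le_sum_of_descent (fun v => (twoSection H).dist v r) s fun v hv =>
      HConnected.exists_edge_dist_lt hconn (ne_of_mem_of_not_mem hv hr)

theorem HConnected.exists_goodOrientation [Fintype V] [Fintype E] [DecidableEq E]
    (hcard : ∀ e, 2 ≤ (H e).card) (hconn : HConnected H)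
    (heq : ∑ e, ((H e).card - 1) = Fintype.card V) : ∃ o, GoodOrientation H o := by
  classical
  let slots (v : V) : Finset (Σ e, Fin ((H e).card - 1)) := univ.filter fun p => v ∈ H p.1
  have hall (s : Finset V) : s.card ≤ (s.biUnion slots).card := by
    have : s.biUnion slots = univ.filter fun p => ∃ v ∈ s, v ∈ H p.1 := by
      ext
      simp [slots]
    rw [this, card_filter_sigma_fst (fun e => (H e).card - 1) fun e => ∃ v ∈ s, v ∈ H e]
    exact HConnected.card_le_sum_edges_meeting hconn heq s
  obtain ⟨f, hinj, hf⟩ := (all_card_le_biUnion_card_iff_exists_injective slots).mp hall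
  have hbij : Function.Bijective f := (Fintype.bijective_iff_injective_and_card f).mpr
    ⟨hinj, by simp [heq]⟩
  have : ∀ e, Nonempty (Fin ((H e).card - 1)) := fun e => ⟨⟨0, by have := hcard e; omega⟩⟩
  refine ⟨fun v => (f v).1, Sigma.fst_surjective.comp hbij.2, fun v => (mem_filter.mp (hf v)).2,
    fun e => ?_⟩
  rw [card_bijective f hbij (t := univ.filter fun p => p.1 = e) (by simp),
    card_filter_sigma_fst (fun e => (H e).card - 1) (· = e), filter_eq', if_pos (mem_univ e),
    sum_singleton]

namespace GoodOrientation

variable [Fintype V] [DecidableEq E] {o : V → E}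

theorem exists_mem_ne (ho : GoodOrientation H o) (e : E) : ∃ v ∈ H e, o v ≠ e := by
  have hpos : 0 < (H e).card := by
    obtain ⟨v, rfl⟩ := ho.1 e
    exact card_pos.mpr ⟨v, ho.2.1 v⟩
  obtain ⟨v, hv, hvo⟩ := exists_mem_notMem_of_card_lt_card (s := univ.filter fun v => o v = e)
    (t := H e) (by rw [ho.2.2 e]; omega)
  exact ⟨v, hv, fun h => hvo (mem_filter.mpr ⟨mem_univ v, h⟩)⟩

theorem comp_perm (ho : GoodOrientation H o) (σ : Equiv.Perm V)
    (hσ : ∀ v, v ∈ H (o (σ v))) : GoodOrientation H (o ∘ σ) := by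
  refine ⟨ho.1.comp σ.surjective, hσ, fun e => ?_⟩
  rw [← ho.2.2 e]
  exact card_bijective σ σ.bijective fun v => by simp

theorem exists_ne [Nonempty V] (ho : GoodOrientation H o) :
    ∃ o', o' ≠ o ∧ GoodOrientation H o' := by
  choose m hm hmo using ho.exists_mem_ne
  obtain ⟨σ, hσ, a, ha⟩ := Function.exists_perm_eq_or_eq_self (m ∘ o)
  refine ⟨o ∘ σ.symm, fun h => hmo (o a) ?_, ho.comp_perm σ.symm fun v => ?_⟩
  · have hsymm : σ.symm (m (o a)) = a := σ.symm_apply_eq.mpr ha.symm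
    simpa [hsymm] using (congrFun h (m (o a))).symm
  · rcases hσ (σ.symm v) with h | h
    · have hv : m (o (σ.symm v)) = v := by simpa using h.symm
      simpa only [hv] using hm (o (σ.symm v))
    · rw [Equiv.apply_symm_apply] at h
      exact h ▸ ho.2.1 v

end GoodOrientation

end Hypergraph

/-- A connected finite hypergraph with `e(G) = v(G)` has at least two distinct good
orientations. -/
theorem two_good_orientations {V E : Type*} [Fintype V] [Fintype E] [DecidableEq E]
    [Nonempty V] (H : E → Finset V)
    (hcard : ∀ e, 2 ≤ (H e).card)
    (hconn : HConnected H)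
    (heq : ∑ e : E, ((H e).card - 1) = Fintype.card V) :
    ∃ o₁ o₂ : V → E, o₁ ≠ o₂ ∧ GoodOrientation H o₁ ∧ GoodOrientation H o₂ := by
  obtain ⟨o, ho⟩ := HConnected.exists_goodOrientation hcard hconn heq
  obtain ⟨o', hne, ho'⟩ := ho.exists_ne
  exact ⟨o', o, hne, ho', ho⟩
end

section
/- For any N × N tw-matrix A (total weight N) there exist real numbers r_1, …, r_M and c_1, …, c_N such that the tw-matrix B with entries B_{ij} = A_{ij} + r_i + c_j (and the same weights) has all entries ≥ 0 and has tw-permanent equal to 0. -/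
open Finset

section DualPotentials

variable {ι κ : Type*}

/-- The least shift making row `i` of `A + r + c` nonnegative; the junk value `0` for empty `κ`. -/
noncomputable def rowPotential (A : ι → κ → ℝ) (c : κ → ℝ) (i : ι) : ℝ :=
  ⨆ j, -(A i j + c j)

noncomputable def reducedCost (A : ι → κ → ℝ) (c : κ → ℝ) (i : ι) (j : κ) : ℝ :=
  A i j + rowPotential A c i + c j

lemma rowPotential_le [Nonempty κ] {A : ι → κ → ℝ} {c : κ → ℝ} {i : ι} {r : ℝ}
    (h : ∀ j, 0 ≤ A i j + r + c j) : rowPotential A c i ≤ r :=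
  ciSup_le fun j => by linarith [h j]

variable [Fintype κ]

lemma neg_add_le_rowPotential (A : ι → κ → ℝ) (c : κ → ℝ) (i : ι) (j : κ) :
    -(A i j + c j) ≤ rowPotential A c i :=
  le_ciSup (f := fun j => -(A i j + c j)) (Set.finite_range _).bddAbove j

lemma reducedCost_nonneg (A : ι → κ → ℝ) (c : κ → ℝ) (i : ι) (j : κ) :
    0 ≤ reducedCost A c i j := by
  have := neg_add_le_rowPotential A c i j
  unfold reducedCost
  linarith

lemma rowPotential_sub_const [Nonempty κ] (A : ι → κ → ℝ) (c : κ → ℝ) (i : ι) (t : ℝ) :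
    rowPotential A (fun j => c j - t) i = rowPotential A c i + t := by
  rw [rowPotential, rowPotential, ciSup_add (Set.finite_range _).bddAbove]
  simp_rw [neg_add, sub_eq_add_neg, neg_add, neg_neg, add_assoc]

lemma continuous_rowPotential (A : ι → κ → ℝ) (i : ι) :
    Continuous fun c => rowPotential A c i := by
  rcases isEmpty_or_nonempty κ with hκ | hκ
  · simpa [rowPotential] using continuous_const
  · simp_rw [rowPotential, ← Finset.sup'_univ_eq_ciSup]
    exact Continuous.finset_sup'_apply _ fun j _ => by fun_prop

noncomputable def tightColumns (A : ι → κ → ℝ) (c : κ → ℝ) (i : ι) : Finset κ :=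
  {j | reducedCost A c i j = 0}

variable [Fintype ι]

noncomputable def dualObjective (m : ι → ℕ) (A : ι → κ → ℝ) (c : κ → ℝ) : ℝ :=
  ∑ i, (m i : ℝ) * rowPotential A c i + ∑ j, c j

variable {m : ι → ℕ} {A : ι → κ → ℝ} {c : κ → ℝ}

lemma continuous_dualObjective (m : ι → ℕ) (A : ι → κ → ℝ) :
    Continuous (dualObjective m A) :=
  (continuous_finsetSum _ fun i _ => continuous_const.mul (continuous_rowPotential A i)).add
    (continuous_finsetSum _ fun j _ => continuous_apply j)

lemma dualObjective_sub_const [Nonempty κ] (hw : ∑ i, m i = Fintype.card κ) (t : ℝ) :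
    dualObjective m A (fun j => c j - t) = dualObjective m A c := by
  have hw' : ∑ i, (m i : ℝ) = Fintype.card κ := by exact_mod_cast hw
  simp only [dualObjective, rowPotential_sub_const, mul_add, sum_add_distrib, sum_sub_distrib,
    ← sum_mul, hw', sum_const, card_univ, nsmul_eq_mul]
  ring

lemma dualObjective_le [Nonempty κ] {r : ι → ℝ} (h : ∀ i j, 0 ≤ A i j + r i + c j) :
    dualObjective m A c ≤ ∑ i, (m i : ℝ) * r i + ∑ j, c j := by
  unfold dualObjective
  gcongr with i
  exact rowPotential_le (h i)

lemma dualObjective_min_le {D : ℝ} (hD : ∀ i j k, A i k ≤ A i j + D) (k : κ) :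
    dualObjective m A (fun j => min (c j) (c k + D)) ≤ dualObjective m A c := by
  have : Nonempty κ := ⟨k⟩
  -- a clipped entry `A i j + c k + D` never beats `A i k + c k`, so the row potentials cannot grow
  have hrow : ∀ i, rowPotential A (fun j => min (c j) (c k + D)) i ≤ rowPotential A c i :=
    fun i => ciSup_le fun j => by
      rcases min_choice (c j) (c k + D) with h | h <;> simp only [h]
      · exact neg_add_le_rowPotential A c i j
      · linarith [hD i j k, neg_add_le_rowPotential A c i k]
  unfold dualObjective
  gcongr with i j
  · exact hrow i
  · exact min_le_left _ _

lemma exists_mem_Icc_dualObjective_le (hw : ∑ i, m i = Fintype.card κ) {D : ℝ} (hD₀ : 0 ≤ D)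
    (hD : ∀ i j k, A i k ≤ A i j + D) (c : κ → ℝ) :
    ∃ c' ∈ Set.Icc 0 fun _ => D, dualObjective m A c' ≤ dualObjective m A c := by
  rcases isEmpty_or_nonempty κ with hκ | hκ
  · exact ⟨c, ⟨isEmptyElim, isEmptyElim⟩, le_rfl⟩
  obtain ⟨k, -, hk⟩ := univ.exists_min_image c univ_nonempty
  set c₀ : κ → ℝ := fun j => c j - c k
  have hk₀ : c₀ k = 0 := sub_self _
  refine ⟨fun j => min (c₀ j) (c₀ k + D), ⟨fun j => ?_, fun j => ?_⟩, ?_⟩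
  · simp only [Pi.zero_apply, hk₀, zero_add, c₀]
    exact le_min (sub_nonneg.2 (hk j (mem_univ j))) hD₀
  · simp only [hk₀, zero_add]
    exact min_le_right _ _
  · calc dualObjective m A _ ≤ dualObjective m A c₀ :=
          dualObjective_min_le hD k
      _ = dualObjective m A c := dualObjective_sub_const hw _

lemma exists_forall_dualObjective_le (m : ι → ℕ) (A : ι → κ → ℝ)
    (hw : ∑ i, m i = Fintype.card κ) :
    ∃ c, ∀ c', dualObjective m A c ≤ dualObjective m A c' := by
  obtain ⟨D, hD⟩ := Finite.exists_le fun p : ι × κ × κ => A p.1 p.2.2 - A p.1 p.2.1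
  have hD' : ∀ i j k, A i k ≤ A i j + max D 0 := fun i j k => by
    linarith [hD (i, j, k), le_max_left D 0]
  obtain ⟨c₀, hc₀, -⟩ := exists_mem_Icc_dualObjective_le hw (le_max_right D 0) hD' 0
  obtain ⟨c, -, hc⟩ :=
    isCompact_Icc.exists_isMinOn ⟨c₀, hc₀⟩ (continuous_dualObjective m A).continuousOn
  refine ⟨c, fun c' => ?_⟩
  obtain ⟨c'', hc'', hle⟩ := exists_mem_Icc_dualObjective_le hw (le_max_right D 0) hD' c'
  exact (hc hc'').trans hle

variable [DecidableEq κ]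

lemma exists_dualObjective_lt_of_card_lt (hw : ∑ i, m i = Fintype.card κ) (T : Finset ι)
    (hT : #(T.biUnion (tightColumns A c)) < ∑ i ∈ T, m i) :
    ∃ c', dualObjective m A c' < dualObjective m A c := by
  classical
  set J := T.biUnion (tightColumns A c)
  obtain ⟨j₀, hj₀⟩ : Jᶜ.Nonempty := by
    have : ∑ i ∈ T, m i ≤ Fintype.card κ := (sum_le_sum_of_subset (subset_univ T)).trans_eq hw
    rw [← card_pos, card_compl]
    exact Nat.sub_pos_of_lt (hT.trans_le this)
  have : Nonempty κ := ⟨j₀⟩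
  obtain ⟨i₀, hi₀⟩ : T.Nonempty := nonempty_of_sum_ne_zero (Nat.ne_zero_of_lt hT)
  obtain ⟨p, hp, hmin⟩ := (T ×ˢ Jᶜ).exists_min_image (fun p => reducedCost A c p.1 p.2)
    ⟨(i₀, j₀), mem_product.2 ⟨hi₀, hj₀⟩⟩
  obtain ⟨hp₁, hp₂⟩ := mem_product.1 hp
  set ε := reducedCost A c p.1 p.2
  have hε : 0 < ε := (reducedCost_nonneg A c p.1 p.2).lt_of_ne fun h =>
    mem_compl.1 hp₂ (mem_biUnion.2 ⟨p.1, hp₁, mem_filter.2 ⟨mem_univ _, h.symm⟩⟩)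
  have hfeas : ∀ i j, 0 ≤ A i j + (rowPotential A c i - if i ∈ T then ε else 0) +
      (c j + if j ∈ J then ε else 0) := fun i j => by
    have := reducedCost_nonneg A c i j
    unfold reducedCost at this
    by_cases hi : i ∈ T <;> by_cases hj : j ∈ J <;> simp only [hi, hj, if_true, if_false]
    · linarith
    · have := hmin (i, j) (mem_product.2 ⟨hi, mem_compl.2 hj⟩)
      unfold reducedCost at this
      linarith
    all_goals linarith
  have hTJ : (#J : ℝ) < ∑ i ∈ T, (m i : ℝ) := by exact_mod_cast hT
  refine ⟨fun j => c j + if j ∈ J then ε else 0, ?_⟩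
  calc dualObjective m A _
      ≤ ∑ i, (m i : ℝ) * (rowPotential A c i - if i ∈ T then ε else 0) +
          ∑ j, (c j + if j ∈ J then ε else 0) := dualObjective_le hfeas
    _ = dualObjective m A c - (∑ i ∈ T, (m i : ℝ) - #J) * ε := by
      simp only [dualObjective, mul_sub, mul_ite, mul_zero, sum_sub_distrib, sum_ite_mem,
        univ_inter, sum_add_distrib, sum_const, nsmul_eq_mul, ← sum_mul]
      ring
    _ < dualObjective m A c := sub_lt_self _ (mul_pos (sub_pos.2 hTJ) hε)

lemma card_le_card_biUnion_tightColumns (hw : ∑ i, m i = Fintype.card κ)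
    (hc : ∀ c', dualObjective m A c ≤ dualObjective m A c') (s : Finset (Σ i, Fin (m i))) :
    #s ≤ #(s.biUnion fun p => tightColumns A c p.1) := by
  classical
  by_contra! hs
  have hs_le : #s ≤ ∑ i ∈ s.image Sigma.fst, m i := calc
    #s ≤ #((s.image Sigma.fst).sigma fun i => (univ : Finset (Fin (m i)))) :=
      card_le_card fun p hp => mem_sigma.2 ⟨mem_image_of_mem _ hp, mem_univ _⟩
    _ = ∑ i ∈ s.image Sigma.fst, m i := by simp [card_sigma]
  obtain ⟨c', hc'⟩ := exists_dualObjective_lt_of_card_lt (A := A) (c := c) hw (s.image Sigma.fst)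
    (by rw [image_biUnion]; omega)
  exact (hc c').not_gt hc'

end DualPotentials

lemma isTWPartition_image_of_injective {M N : ℕ} (m : Fin M → ℕ) (hw : ∑ i, m i = N)
    {f : (Σ i, Fin (m i)) → Fin N} (hf : Function.Injective f) :
    IsTWPartition m fun i => univ.image fun k => f ⟨i, k⟩ := by
  have hbij : Function.Bijective f :=
    (Fintype.bijective_iff_injective_and_card f).2 ⟨hf, by simp [hw]⟩
  refine ⟨fun i => ?_, fun j => ?_⟩
  · rw [card_image_of_injective _ fun k k' h => sigma_mk_injective (hf h)]
    simp
  · obtain ⟨⟨i, k⟩, rfl⟩ := hbij.2 j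
    refine ⟨i, mem_image_of_mem _ (mem_univ k), fun i' hi' => ?_⟩
    obtain ⟨k', -, hk'⟩ := mem_image.1 hi'
    exact congrArg Sigma.fst (hf hk')

lemma twPerm_eq_zero_of_nonneg {M N : ℕ} {m : Fin M → ℕ} {B : Fin M → Fin N → ℝ}
    (hB : ∀ i j, 0 ≤ B i j) {P : Fin M → Finset (Fin N)} (hP : IsTWPartition m P)
    (hz : ∀ i, ∀ j ∈ P i, B i j = 0) : twPerm m B = 0 :=
  IsLeast.csInf_eq ⟨⟨P, hP, sum_eq_zero fun i _ => sum_eq_zero (hz i)⟩, by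
    rintro _ ⟨Q, -, rfl⟩
    exact sum_nonneg fun i _ => sum_nonneg fun j _ => hB i j⟩

theorem exists_rescaling_nonneg_twPerm_zero_general {M N : ℕ}
    (m : Fin M → ℕ) (A : Fin M → Fin N → ℝ)
    (hw : ∑ i, m i = N) :
    ∃ (r : Fin M → ℝ) (c : Fin N → ℝ),
      (∀ i j, 0 ≤ A i j + r i + c j) ∧
        twPerm m (fun i j => A i j + r i + c j) = 0 := by
  have hw' : ∑ i, m i = Fintype.card (Fin N) := by rw [hw, Fintype.card_fin]
  obtain ⟨c, hc⟩ := exists_forall_dualObjective_le m A hw'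
  obtain ⟨f, hf, hft⟩ := (all_card_le_biUnion_card_iff_exists_injective _).1
    (card_le_card_biUnion_tightColumns hw' hc)
  refine ⟨rowPotential A c, c, reducedCost_nonneg A c,
    twPerm_eq_zero_of_nonneg (reducedCost_nonneg A c) (isTWPartition_image_of_injective m hw hf) ?_⟩
  simp only [mem_image, mem_univ, true_and]
  rintro i _ ⟨k, rfl⟩
  exact (mem_filter.1 (hft ⟨i, k⟩)).2

/-- Any `N × N` tw-matrix can be rescaled, by adding constants `r i` to the rows and
`c j` to the columns, so that all entries are nonnegative and the tw-permanent is `0`. -/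
theorem exists_rescaling_nonneg_twPerm_zero {M N : ℕ}
    (m : Fin M → ℕ) (A : Fin M → Fin N → ℝ)
    (hm : ∀ i, 1 ≤ m i) (hw : ∑ i, m i = N) :
    ∃ (r : Fin M → ℝ) (c : Fin N → ℝ),
      (∀ i j, 0 ≤ A i j + r i + c j) ∧
        twPerm m (fun i j => A i j + r i + c j) = 0 :=
  exists_rescaling_nonneg_twPerm_zero_general m A hw
end
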